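/- arXiv:2203.14793 — 7 statements merged into one kernel-verified Lean document; each statement's English description precedes it below -/
import Mathlib

section
/- Let G be a finitely generated residually finite group and let σ : G × G → ℤ be a normalized 2-cocycle (i.e. σ(g,h) + σ(gh,k) = σ(h,k) + σ(g,hk) for all g,h,k ∈ G and σ(1,g) = σ(g,1) = 0 for all g). Let G̃ be the central extension of G by ℤ determined by σ, namely G̃ = ℤ × G with multiplication (m,g)·(n,h) = (m + n + σ(g,h), gh). Suppose there exist r ≥ 0, group homomorphisms φ₁,…,φ_r, ψ₁,…,ψ_r from G to the additive group (ℂ,+), and a function u : G → ℂ such that for all g,h ∈ G one has σ(g,h) = φ₁(g)ψ₁(h) + ⋯ + φ_r(g)ψ_r(h) + u(g) + u(h) − u(gh) (equality in ℂ, viewing σ(g,h) ∈ ℤ ⊂ ℂ). Then G̃ is residually finite. -/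
/-- A group `K` is residually finite if every nontrivial element is detected by a
homomorphism to some finite group. -/
def ResiduallyFinite (K : Type*) [Group K] : Prop :=
  ∀ k : K, k ≠ 1 → ∃ (F : Type) (_ : Group F) (_ : Finite F), ∃ h : K →* F, h k ≠ 1

/-- A normalized `ℤ`-valued 2-cocycle on a group `G`. -/
structure IntCocycle (G : Type*) [Group G] where
  σ : G → G → ℤ
  cocycle : ∀ g h k : G, σ g h + σ (g * h) k = σ h k + σ g (h * k)
  norm_left : ∀ g : G, σ 1 g = 0
  norm_right : ∀ g : G, σ g 1 = 0

/-- The central extension `ℤ ×_σ G` of `G` by `ℤ` determined by a normalized 2-cocycle. -/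
def CentralExt {G : Type*} [Group G] (_c : IntCocycle G) : Type _ := ℤ × G

namespace CentralExt

variable {G : Type*} [Group G] (c : IntCocycle G)

instance : Group (CentralExt c) where
  mul a b := ((a.1 + b.1 + c.σ a.2 b.2, a.2 * b.2) : ℤ × G)
  one := ((0, 1) : ℤ × G)
  inv a := ((-a.1 - c.σ a.2⁻¹ a.2, a.2⁻¹) : ℤ × G)
  mul_assoc a b d := by
    have h := c.cocycle a.2 b.2 d.2
    refine Prod.ext ?_ ?_
    · show a.1 + b.1 + c.σ a.2 b.2 + d.1 + c.σ (a.2 * b.2) d.2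
        = a.1 + (b.1 + d.1 + c.σ b.2 d.2) + c.σ a.2 (b.2 * d.2)
      omega
    · exact mul_assoc a.2 b.2 d.2
  one_mul a := by
    refine Prod.ext ?_ ?_
    · show (0 : ℤ) + a.1 + c.σ 1 a.2 = a.1
      rw [c.norm_left]; omega
    · exact one_mul a.2
  mul_one a := by
    refine Prod.ext ?_ ?_
    · show a.1 + (0 : ℤ) + c.σ a.2 1 = a.1
      rw [c.norm_right]; omega
    · exact mul_one a.2
  inv_mul_cancel a := by
    refine Prod.ext ?_ ?_
    · show (-a.1 - c.σ a.2⁻¹ a.2) + a.1 + c.σ a.2⁻¹ a.2 = (0 : ℤ)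
      omega
    · exact inv_mul_cancel a.2

end CentralExt

lemma ratden_int {q : ℚ} {n : ℕ} (h : q.den ∣ n) : ∃ z : ℤ, (n : ℚ) * q = z := by
  obtain ⟨t, ht⟩ := h
  refine ⟨(t : ℤ) * q.num, ?_⟩
  have h0 : (q.den : ℚ) * q = q.num := Rat.den_mul_eq_num q
  subst ht
  calc ((q.den * t : ℕ) : ℚ) * q = (t : ℚ) * ((q.den : ℚ) * q) := by push_cast; ring
  _ = (t : ℚ) * q.num := by rw [h0]
  _ = ((t : ℤ) * q.num : ℤ) := by push_cast; ring

set_option maxHeartbeats 1000000 in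
set_option synthInstance.maxHeartbeats 1000000 in
theorem exists_integral_data {G : Type} [Group G] (hfg : Group.FG G)
    (c : IntCocycle G) (r : ℕ) (φ ψ : Fin r → G → ℂ)
    (hφ : ∀ i (g h : G), φ i (g * h) = φ i g + φ i h)
    (hψ : ∀ i (g h : G), ψ i (g * h) = ψ i g + ψ i h)
    (u : G → ℂ)
    (hσ : ∀ g h : G, (c.σ g h : ℂ) = (∑ i, φ i g * ψ i h) + u g + u h - u (g * h)) :
    ∃ (ι : Type) (_ : Fintype ι) (x : G → ι → ℤ) (B : ι → ι → ℤ) (L : ℕ) (a : G → ℤ),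
      0 < L ∧ (∀ g h j, x (g * h) j = x g j + x h j) ∧ (∀ j, x 1 j = 0) ∧ a 1 = 0 ∧
      ∀ g h, (L : ℤ) * c.σ g h
        = (∑ j, ∑ k, x g j * B j k * x h k) + a g + a h - a (g * h) := by
  classical
  obtain ⟨S, hSclo, hSfin⟩ := Group.fg_iff.mp hfg
  -- the joint character map
  set Φ : G → ((Fin r → ℂ) × (Fin r → ℂ)) := fun g => (fun i => φ i g, fun i => ψ i g) with hΦ
  have hΦmul : ∀ g h, Φ (g * h) = Φ g + Φ h := by
    intro g h
    refine Prod.ext ?_ ?_ <;> funext i <;>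
      simp [hΦ, hφ, hψ, Prod.fst_add, Prod.snd_add]
  have hφ1 : ∀ i, φ i (1 : G) = 0 := by
    intro i; have h := hφ i 1 1; rw [one_mul] at h; linear_combination -h
  have hψ1 : ∀ i, ψ i (1 : G) = 0 := by
    intro i; have h := hψ i 1 1; rw [one_mul] at h; linear_combination -h
  have hΦ1 : Φ (1 : G) = 0 := by
    refine Prod.ext ?_ ?_ <;> funext i <;> simp [hΦ, hφ1, hψ1]
  have hΦinv : ∀ g, Φ g⁻¹ = -Φ g := by
    intro g
    have h := hΦmul g g⁻¹
    rw [mul_inv_cancel, hΦ1] at h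
    exact (neg_eq_of_add_eq_zero_right h.symm).symm
  set Λ : Submodule ℤ ((Fin r → ℂ) × (Fin r → ℂ)) := Submodule.span ℤ (Φ '' S) with hΛ
  have hmem : ∀ g : G, Φ g ∈ Λ := by
    intro g
    have hg : g ∈ Subgroup.closure S := by rw [hSclo]; trivial
    refine Subgroup.closure_induction (p := fun g _ => Φ g ∈ Λ)
      (fun y hy => Submodule.subset_span ⟨y, hy, rfl⟩)
      (by show Φ (1 : G) ∈ Λ; rw [hΦ1]; exact zero_mem Λ)
      (fun y z _ _ py pz => by show Φ (y * z) ∈ Λ; rw [hΦmul]; exact add_mem py pz)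
      (fun y _ py => by show Φ y⁻¹ ∈ Λ; rw [hΦinv]; exact neg_mem py) hg
  haveI : Module.Finite ℤ Λ := Module.Finite.span_of_finite ℤ (hSfin.image Φ)
  haveI : Module.Free ℤ Λ := inferInstance
  set ι := Module.Free.ChooseBasisIndex ℤ Λ with hι
  set b : Module.Basis ι ℤ Λ := Module.Free.chooseBasis ℤ Λ with hb
  set ΦL : G → Λ := fun g => ⟨Φ g, hmem g⟩ with hΦL
  set x : G → ι → ℤ := fun g j => b.repr (ΦL g) j with hx
  have hΦLmul : ∀ g h, ΦL (g * h) = ΦL g + ΦL h := fun g h => Subtype.ext (hΦmul g h)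
  have hΦL1 : ΦL 1 = 0 := Subtype.ext hΦ1
  have hx_add : ∀ g h j, x (g * h) j = x g j + x h j := by
    intro g h j
    rw [hx]; dsimp only; rw [hΦLmul, map_add]; rfl
  have hx1 : ∀ j, x (1 : G) j = 0 := by
    intro j; rw [hx]; dsimp only; rw [hΦL1, map_zero]; rfl
  -- expansion in the basis
  have hrepr : ∀ g, Φ g = ∑ j, x g j • (b j : ((Fin r → ℂ) × (Fin r → ℂ))) := by
    intro g
    have h1 := b.sum_repr (ΦL g)
    have h2 := congrArg (Submodule.subtype Λ) h1
    rw [map_sum] at h2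
    simpa [hx] using h2.symm
  set C : ι → Fin r → ℂ := fun j i => (b j : ((Fin r → ℂ) × (Fin r → ℂ))).1 i with hC
  set Dm : ι → Fin r → ℂ := fun j i => (b j : ((Fin r → ℂ) × (Fin r → ℂ))).2 i with hDm
  have hφx : ∀ i g, φ i g = ∑ j, (x g j : ℂ) * C j i := by
    intro i g
    set E1 : ((Fin r → ℂ) × (Fin r → ℂ)) →ₗ[ℤ] ℂ :=
      LinearMap.comp (LinearMap.proj i) (LinearMap.fst ℤ (Fin r → ℂ) (Fin r → ℂ)) with hE1
    have h1 := congrArg E1 (hrepr g)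
    rw [map_sum] at h1
    simp only [map_zsmul, zsmul_eq_mul, hE1, LinearMap.coe_comp, Function.comp_apply,
      LinearMap.fst_apply, LinearMap.proj_apply] at h1
    exact h1
  have hψx : ∀ i g, ψ i g = ∑ j, (x g j : ℂ) * Dm j i := by
    intro i g
    set E2 : ((Fin r → ℂ) × (Fin r → ℂ)) →ₗ[ℤ] ℂ :=
      LinearMap.comp (LinearMap.proj i) (LinearMap.snd ℤ (Fin r → ℂ) (Fin r → ℂ)) with hE2
    have h1 := congrArg E2 (hrepr g)
    rw [map_sum] at h1
    simp only [map_zsmul, zsmul_eq_mul, hE2, LinearMap.coe_comp, Function.comp_apply,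
      LinearMap.snd_apply, LinearMap.proj_apply] at h1
    exact h1
  set M : ι → ι → ℂ := fun j k => ∑ i, C j i * Dm k i with hM
  have hbil : ∀ g h, (∑ i, φ i g * ψ i h)
      = ∑ j, ∑ k, (x g j : ℂ) * (x h k : ℂ) * M j k := by
    intro g h
    calc (∑ i, φ i g * ψ i h)
        = ∑ i, ∑ j, ∑ k, ((x g j : ℂ) * C j i) * ((x h k : ℂ) * Dm k i) := by
          refine Finset.sum_congr rfl fun i _ => ?_
          rw [hφx i g, hψx i h, Finset.sum_mul_sum]
      _ = ∑ j, ∑ i, ∑ k, ((x g j : ℂ) * C j i) * ((x h k : ℂ) * Dm k i) :=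
          Finset.sum_comm
      _ = ∑ j, ∑ k, ∑ i, ((x g j : ℂ) * C j i) * ((x h k : ℂ) * Dm k i) := by
          exact Finset.sum_congr rfl fun j _ => Finset.sum_comm
      _ = ∑ j, ∑ k, (x g j : ℂ) * (x h k : ℂ) * M j k := by
          refine Finset.sum_congr rfl fun j _ => Finset.sum_congr rfl fun k _ => ?_
          rw [hM]; dsimp only; rw [Finset.mul_sum]
          exact Finset.sum_congr rfl fun i _ => by ring
  -- a ℚ-linear retraction of ℚ ↪ ℂ
  obtain ⟨p, hp⟩ := (Algebra.linearMap ℚ ℂ).exists_leftInverse_of_injective (by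
    rw [LinearMap.ker_eq_bot]
    exact fun a b hab => by
      have : ((a : ℂ)) = b := by simpa [Algebra.linearMap_apply] using hab
      exact_mod_cast this)
  have hpq : ∀ q : ℚ, p ((q : ℂ)) = q := by
    intro q
    have := LinearMap.ext_iff.mp hp q
    simpa [Algebra.linearMap_apply, eq_ratCast] using this
  have hpint : ∀ z : ℤ, p ((z : ℂ)) = (z : ℚ) := by
    intro z
    have := hpq ((z : ℤ) : ℚ)
    push_cast at this
    exact_mod_cast this
  have hpz : ∀ (z : ℤ) (w : ℂ), p ((z : ℂ) * w) = (z : ℚ) * p w := by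
    intro z w
    have h1 : ((z : ℂ)) * w = ((z : ℚ)) • w := by
      rw [Rat.smul_def]; push_cast; ring
    rw [h1, map_smul, smul_eq_mul]
  set u' : G → ℚ := fun g => p (u g) with hu'
  set M' : ι → ι → ℚ := fun j k => p (M j k) with hM'
  have hQ : ∀ g h, (c.σ g h : ℚ)
      = (∑ j, ∑ k, (x g j : ℚ) * (x h k : ℚ) * M' j k) + u' g + u' h - u' (g * h) := by
    intro g h
    have h1 : (c.σ g h : ℂ)
        = (∑ j, ∑ k, (x g j : ℂ) * (x h k : ℂ) * M j k) + u g + u h - u (g * h) := by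
      rw [hσ g h, hbil g h]
    have h2 := congrArg p h1
    rw [hpint] at h2
    rw [h2, map_sub, map_add, map_add, map_sum]
    congr 1
    congr 1
    congr 1
    refine Finset.sum_congr rfl fun j _ => ?_
    rw [map_sum]
    refine Finset.sum_congr rfl fun k _ => ?_
    have h3 : (x g j : ℂ) * (x h k : ℂ) * M j k = ((x g j * x h k : ℤ) : ℂ) * M j k := by
      push_cast; ring
    rw [h3, hpz]
    push_cast
    ring
  have hu'1 : u' 1 = 0 := by
    have h1 := hQ 1 1
    rw [one_mul, c.norm_left 1] at h1
    simp only [hx1, Int.cast_zero, zero_mul, Finset.sum_const_zero] at h1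
    linarith
  -- common denominators
  set Dd : ℕ := ∏ j, ∏ k, (M' j k).den with hDd
  set E : ℕ := ∏ g ∈ hSfin.toFinset, (u' g).den with hE
  set L : ℕ := Dd * E with hL
  have hDddvd : ∀ j k, (M' j k).den ∣ L := by
    intro j k
    have h1 : (M' j k).den ∣ ∏ k', (M' j k').den :=
      Finset.dvd_prod_of_mem _ (Finset.mem_univ k)
    have h2 : (∏ k', (M' j k').den) ∣ Dd := by
      rw [hDd]; exact Finset.dvd_prod_of_mem _ (Finset.mem_univ j)
    exact (h1.trans h2).trans (hL ▸ dvd_mul_right Dd E)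
  have hLpos : 0 < L :=
    Nat.mul_pos (Finset.prod_pos fun j _ => Finset.prod_pos fun k _ => (M' j k).den_pos)
      (Finset.prod_pos fun g _ => (u' g).den_pos)
  have hEdvd : ∀ g ∈ S, (u' g).den ∣ L := by
    intro g hg
    have h1 : (u' g).den ∣ E := by
      rw [hE]; exact Finset.dvd_prod_of_mem _ (hSfin.mem_toFinset.mpr hg)
    exact h1.trans (hL ▸ dvd_mul_left E Dd)
  -- integral matrix
  set B : ι → ι → ℤ := fun j k => ((L : ℚ) * M' j k).num with hB
  have hBval : ∀ j k, ((B j k : ℤ) : ℚ) = (L : ℚ) * M' j k := by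
    intro j k
    obtain ⟨z, hz⟩ := ratden_int (hDddvd j k)
    rw [hB]; dsimp only; rw [hz, Rat.num_intCast]
  have hsum : ∀ g h, ((∑ j, ∑ k, x g j * B j k * x h k : ℤ) : ℚ)
      = (L : ℚ) * ∑ j, ∑ k, (x g j : ℚ) * (x h k : ℚ) * M' j k := by
    intro g h
    rw [Finset.mul_sum]
    push_cast
    refine Finset.sum_congr rfl fun j _ => ?_
    rw [Finset.mul_sum]
    refine Finset.sum_congr rfl fun k _ => ?_
    rw [hBval j k]
    push_cast
    ring
  -- integrality of L * u'
  have hP : ∀ g : G, ∃ z : ℤ, (L : ℚ) * u' g = z := by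
    intro g
    have hg : g ∈ Subgroup.closure S := by rw [hSclo]; trivial
    refine Subgroup.closure_induction (p := fun g _ => ∃ z : ℤ, (L : ℚ) * u' g = z)
      (fun y hy => ratden_int (hEdvd y hy))
      ⟨0, by rw [hu'1]; simp⟩
      (fun y z _ _ hy hz => ?_) (fun y _ hy => ?_) hg
    · obtain ⟨z1, h1⟩ := hy
      obtain ⟨z2, h2⟩ := hz
      refine ⟨z1 + z2 + (∑ j, ∑ k, x y j * B j k * x z k) - L * c.σ y z, ?_⟩
      have hq := hQ y z
      have hs := hsum y z
      push_cast
      push_cast at hs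
      linear_combination (L : ℚ) * hq + h1 + h2 - hs
    · obtain ⟨z1, h1⟩ := hy
      refine ⟨L * c.σ y y⁻¹ - z1 - (∑ j, ∑ k, x y j * B j k * x y⁻¹ k), ?_⟩
      have hq := hQ y y⁻¹
      rw [mul_inv_cancel, hu'1] at hq
      have hs := hsum y y⁻¹
      push_cast
      push_cast at hs
      linear_combination -(L : ℚ) * hq - h1 + hs
  set a : G → ℤ := fun g => ((L : ℚ) * u' g).num with ha
  have haval : ∀ g, ((a g : ℤ) : ℚ) = (L : ℚ) * u' g := by
    intro g
    obtain ⟨z, hz⟩ := hP g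
    rw [ha]; dsimp only; rw [hz, Rat.num_intCast]
  have ha1 : a 1 = 0 := by
    rw [ha]; dsimp only; rw [hu'1, mul_zero, Rat.num_ofNat]
  refine ⟨ι, inferInstance, x, B, L, a, hLpos, hx_add, hx1, ha1, ?_⟩
  intro g h
  have hq := hQ g h
  have hs := hsum g h
  have h1 := haval g
  have h2 := haval h
  have h3 := haval (g * h)
  have key : (((L : ℤ) * c.σ g h : ℤ) : ℚ)
      = (((∑ j, ∑ k, x g j * B j k * x h k) + a g + a h - a (g * h) : ℤ) : ℚ) := by
    push_cast
    push_cast at hs h1 h2 h3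
    linear_combination (L : ℚ) * hq - hs - h1 - h2 + h3
  exact_mod_cast key

section BilExt

variable {ι : Type} [Fintype ι]

def bilSum (s : ℕ) (B : ι → ι → ℤ) (x y : ι → ZMod s) : ZMod s :=
  ∑ j, ∑ k, x j * (B j k : ZMod s) * y k

lemma bilSum_add_left (s : ℕ) (B : ι → ι → ℤ) (x x' y : ι → ZMod s) :
    bilSum s B (x + x') y = bilSum s B x y + bilSum s B x' y := by
  simp [bilSum, add_mul, Finset.sum_add_distrib]

lemma bilSum_add_right (s : ℕ) (B : ι → ι → ℤ) (x y y' : ι → ZMod s) :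
    bilSum s B x (y + y') = bilSum s B x y + bilSum s B x y' := by
  simp [bilSum, mul_add, Finset.sum_add_distrib]

lemma bilSum_neg_left (s : ℕ) (B : ι → ι → ℤ) (x y : ι → ZMod s) :
    bilSum s B (-x) y = -bilSum s B x y := by
  simp [bilSum, neg_mul]

def BilExt (s : ℕ) (B : ι → ι → ℤ) : Type := ZMod s × (ι → ZMod s)

instance (s : ℕ) (B : ι → ι → ℤ) : Group (BilExt s B) where
  mul a b := ((a.1 + b.1 + bilSum s B a.2 b.2, a.2 + b.2) : ZMod s × (ι → ZMod s))
  one := ((0, 0) : ZMod s × (ι → ZMod s))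
  inv a := ((-a.1 + bilSum s B a.2 a.2, -a.2) : ZMod s × (ι → ZMod s))
  mul_assoc a b d := by
    refine Prod.ext ?_ ?_
    · show a.1 + b.1 + bilSum s B a.2 b.2 + d.1 + bilSum s B (a.2 + b.2) d.2
        = a.1 + (b.1 + d.1 + bilSum s B b.2 d.2) + bilSum s B a.2 (b.2 + d.2)
      rw [bilSum_add_left, bilSum_add_right]; ring
    · show a.2 + b.2 + d.2 = a.2 + (b.2 + d.2)
      rw [add_assoc]
  one_mul a := by
    refine Prod.ext ?_ ?_
    · show (0 : ZMod s) + a.1 + bilSum s B 0 a.2 = a.1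
      simp [bilSum]
    · show (0 : ι → ZMod s) + a.2 = a.2
      simp
  mul_one a := by
    refine Prod.ext ?_ ?_
    · show a.1 + (0 : ZMod s) + bilSum s B a.2 0 = a.1
      simp [bilSum]
    · show a.2 + (0 : ι → ZMod s) = a.2
      simp
  inv_mul_cancel a := by
    refine Prod.ext ?_ ?_
    · show (-a.1 + bilSum s B a.2 a.2) + a.1 + bilSum s B (-a.2) a.2 = (0 : ZMod s)
      rw [bilSum_neg_left]; ring
    · show -a.2 + a.2 = (0 : ι → ZMod s)
      simp

instance (s : ℕ) (B : ι → ι → ℤ) [NeZero s] : Finite (BilExt s B) :=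
  inferInstanceAs (Finite (ZMod s × (ι → ZMod s)))

end BilExt

/-- If `G` is a finitely generated residually finite group, `σ` is a normalized
`ℤ`-valued 2-cocycle on `G`, and (viewed in `ℂ`) `σ` differs by a coboundary from a sum of
cup products of additive characters, then the central extension `ℤ ×_σ G` is residually
finite. -/
theorem residuallyFinite_centralExt
    {G : Type} [Group G] (hfg : Group.FG G) (hrf : ResiduallyFinite G)
    (c : IntCocycle G) (r : ℕ) (φ ψ : Fin r → G → ℂ)
    (hφ : ∀ i (g h : G), φ i (g * h) = φ i g + φ i h)
    (hψ : ∀ i (g h : G), ψ i (g * h) = ψ i g + ψ i h)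
    (u : G → ℂ)
    (hσ : ∀ g h : G, (c.σ g h : ℂ) = (∑ i, φ i g * ψ i h) + u g + u h - u (g * h)) :
    ResiduallyFinite (CentralExt c) := by
  intro k hk
  by_cases h2 : k.2 = 1
  · -- central element: use the integral data
    have h1 : k.1 ≠ 0 := by
      intro h0
      exact hk (Prod.ext h0 h2)
    obtain ⟨ι, _, x, B, L, a, hL, hxadd, hx1, ha1, key⟩ :=
      exists_integral_data hfg c r φ ψ hφ hψ u hσ
    set N : ℕ := k.1.natAbs + 1 with hN
    set s : ℕ := N * L with hs
    haveI : NeZero s := ⟨by positivity⟩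
    have hcast : ∀ g h : G, ((∑ j, ∑ k, x g j * B j k * x h k : ℤ) : ZMod s)
        = bilSum s B (fun j => ((x g j : ℤ) : ZMod s)) (fun j => ((x h j : ℤ) : ZMod s)) := by
      intro g h
      rw [bilSum]
      push_cast
      rfl
    refine ⟨BilExt s B, inferInstance, inferInstance,
      MonoidHom.mk' (fun pq => (((L * pq.1 + a pq.2 : ℤ) : ZMod s),
        fun j => ((x pq.2 j : ℤ) : ZMod s))) ?_, ?_⟩
    · intro pq qr
      refine Prod.ext ?_ ?_
      · show ((L * (pq.1 + qr.1 + c.σ pq.2 qr.2) + a (pq.2 * qr.2) : ℤ) : ZMod s)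
          = ((L * pq.1 + a pq.2 : ℤ) : ZMod s) + ((L * qr.1 + a qr.2 : ℤ) : ZMod s)
            + bilSum s B (fun j => ((x pq.2 j : ℤ) : ZMod s))
                (fun j => ((x qr.2 j : ℤ) : ZMod s))
        rw [← hcast]
        have hint : (L : ℤ) * (pq.1 + qr.1 + c.σ pq.2 qr.2) + a (pq.2 * qr.2)
            = ((L : ℤ) * pq.1 + a pq.2) + ((L : ℤ) * qr.1 + a qr.2)
              + (∑ j, ∑ k, x pq.2 j * B j k * x qr.2 k) := by
          have := key pq.2 qr.2
          ring_nf
          ring_nf at this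
          omega
        rw [← Int.cast_add, ← Int.cast_add, hint]
      · funext j
        show ((x (pq.2 * qr.2) j : ℤ) : ZMod s)
          = ((x pq.2 j : ℤ) : ZMod s) + ((x qr.2 j : ℤ) : ZMod s)
        rw [hxadd]
        push_cast
        rfl
    · intro hcontra
      have hfst : ((L * k.1 + a k.2 : ℤ) : ZMod s) = (0 : ZMod s) :=
        congrArg Prod.fst hcontra
      rw [h2, ha1, add_zero] at hfst
      have hdvd : (s : ℤ) ∣ (L : ℤ) * k.1 :=
        (ZMod.intCast_zmod_eq_zero_iff_dvd _ s).mp hfst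
      rw [hs] at hdvd
      push_cast at hdvd
      obtain ⟨t, ht⟩ := hdvd
      have hLne : (L : ℤ) ≠ 0 := by exact_mod_cast hL.ne'
      have hNk : (N : ℤ) ∣ k.1 := by
        refine ⟨t, ?_⟩
        have : (L : ℤ) * k.1 = (L : ℤ) * ((N : ℤ) * t) := by rw [ht]; push_cast; ring
        exact mul_left_cancel₀ hLne this
      have hNle : N ≤ k.1.natAbs := by
        have h3 : (N : ℤ) ∣ (k.1.natAbs : ℤ) := (Int.dvd_natAbs).mpr hNk
        have h4 : N ∣ k.1.natAbs := Int.ofNat_dvd.mp h3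
        exact Nat.le_of_dvd (Int.natAbs_pos.mpr h1) h4
      omega
  · -- noncentral element: project to G
    obtain ⟨F, iG, iF, h, hh⟩ := hrf k.2 h2
    exact ⟨F, iG, iF, h.comp (MonoidHom.mk' (fun a => a.2) fun a b => rfl), hh⟩
end

section
/- Let G be a finitely generated residually finite group and let σ : G × G → ℤ be a normalized 2-cocycle (σ(g,h) + σ(gh,k) = σ(h,k) + σ(g,hk) and σ(1,g) = σ(g,1) = 0). Let G̃ = ℤ ×_σ G be the corresponding central extension of G by ℤ. Suppose there exist group homomorphisms φ₁,…,φ_r, ψ₁,…,ψ_r : G → (ℂ,+) and a function u : G → ℂ such that σ(g,h) = Σᵢ φᵢ(g)ψᵢ(h) + u(g) + u(h) − u(gh) for all g,h ∈ G. Then for every positive integer n, the quotient group G̃ / (nℤ × {1}) (the quotient of G̃ by the central subgroup {(nm,1) : m ∈ ℤ}) is residually finite. -/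
namespace CentralExt

variable {G : Type*} [Group G] (c : IntCocycle G)

/-- The central element `(m, 1)` of `ℤ ×_σ G`.  The central subgroup `nℤ × {1}` is
the cyclic subgroup generated by `central c n`. -/
def central (m : ℤ) : CentralExt c := ((m, 1) : ℤ × G)

theorem commute_central (m : ℤ) (b : CentralExt c) :
    Commute (central c m) b := by
  show central c m * b = b * central c m
  refine Prod.ext ?_ ?_
  · show m + b.1 + c.σ 1 b.2 = b.1 + m + c.σ b.2 1
    rw [c.norm_left, c.norm_right]; omega
  · show (1 : G) * b.2 = b.2 * 1
    rw [one_mul, mul_one]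

/-- The central subgroup `nℤ × {1}` is normal in `ℤ ×_σ G`. -/
instance zpowers_normal (m : ℤ) :
    (Subgroup.zpowers (central c m)).Normal := by
  constructor
  intro x hx g
  obtain ⟨k, rfl⟩ := hx
  have h : Commute g (central c m ^ k) :=
    ((commute_central c m g).symm.zpow_right k)
  rw [h.eq, mul_assoc, mul_inv_cancel, mul_one]
  exact Subgroup.zpow_mem _ (Subgroup.mem_zpowers _) k

end CentralExt

namespace RFAux

open CentralExt

variable {G : Type} [Group G] (c : IntCocycle G)

theorem central_mul (a b : ℤ) :
    central c a * central c b = central c (a + b) := by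
  refine Prod.ext ?_ ?_
  · show a + b + c.σ 1 1 = a + b
    rw [c.norm_left]; omega
  · exact one_mul 1

/-- The central embedding as a monoid hom. -/
def centralHom : Multiplicative ℤ →* CentralExt c :=
  MonoidHom.mk' (fun m => central c m.toAdd) (fun a b => (central_mul c _ _).symm)

theorem central_zpow (a k : ℤ) :
    (central c a) ^ k = central c (a * k) := by
  have h := map_zpow (centralHom c) (Multiplicative.ofAdd a) k
  have h2 : Multiplicative.ofAdd a ^ k = Multiplicative.ofAdd (k • a) := by
    rfl
  rw [h2] at h
  simpa [centralHom, mul_comm] using h.symm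

/-- The projection to `G` as a monoid hom. -/
def projHom : CentralExt c →* G :=
  MonoidHom.mk' (fun x => x.2) (fun _ _ => rfl)

theorem projHom_central (m : ℤ) : projHom c (central c m) = 1 := rfl

/-! ### The finite Heisenberg-type group -/

/-- A Heisenberg-type group determined by a biadditive pairing. -/
def Heis (T A B : Type) [AddCommGroup T] [AddCommGroup A] [AddCommGroup B]
    (_P : A →+ B →+ T) : Type := T × A × B

namespace Heis

variable {T A B : Type} [AddCommGroup T] [AddCommGroup A] [AddCommGroup B]
  (P : A →+ B →+ T)

instance : Group (Heis T A B P) where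
  mul x y := ((x.1 + y.1 + P x.2.1 y.2.2, x.2.1 + y.2.1, x.2.2 + y.2.2) : T × A × B)
  one := ((0, 0, 0) : T × A × B)
  inv x := ((-x.1 + P x.2.1 x.2.2, -x.2.1, -x.2.2) : T × A × B)
  mul_assoc x y z := by
    show (((x.1 + y.1 + P x.2.1 y.2.2) + z.1 + P (x.2.1 + y.2.1) z.2.2,
        x.2.1 + y.2.1 + z.2.1, x.2.2 + y.2.2 + z.2.2) : T × A × B)
      = ((x.1 + (y.1 + z.1 + P y.2.1 z.2.2) + P x.2.1 (y.2.2 + z.2.2),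
        x.2.1 + (y.2.1 + z.2.1), x.2.2 + (y.2.2 + z.2.2)) : T × A × B)
    refine Prod.ext ?_ (Prod.ext ?_ ?_) <;>
      simp [map_add, AddMonoidHom.add_apply] <;> abel
  one_mul x := by
    show ((0 + x.1 + P 0 x.2.2, 0 + x.2.1, 0 + x.2.2) : T × A × B) = x
    simp
    rfl
  mul_one x := by
    show ((x.1 + 0 + P x.2.1 0, x.2.1 + 0, x.2.2 + 0) : T × A × B) = x
    simp
    rfl
  inv_mul_cancel x := by
    show (((-x.1 + P x.2.1 x.2.2) + x.1 + P (-x.2.1) x.2.2, -x.2.1 + x.2.1, -x.2.2 + x.2.2)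
        : T × A × B) = ((0, 0, 0) : T × A × B)
    refine Prod.ext ?_ (Prod.ext ?_ ?_) <;>
      simp [map_neg, AddMonoidHom.neg_apply] <;> abel

instance [Finite T] [Finite A] [Finite B] : Finite (Heis T A B P) :=
  inferInstanceAs (Finite (T × A × B))

end Heis

/-! ### The integral linear functional -/

/-- The integer value of `D • ℓ v`. -/
noncomputable def lamI (ℓ : ℂ →ₗ[ℚ] ℚ) (D : ℕ) (v : ℂ) : ℤ := ((D : ℚ) * ℓ v).num

/-- The subgroup `N·A` of a subgroup `A` of `ℂ`. -/
noncomputable def Nsub (N : ℕ) (A : Submodule ℤ ℂ) : Submodule ℤ ↥A :=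
  LinearMap.range ((N : ℤ) • (LinearMap.id : ↥A →ₗ[ℤ] ↥A))

theorem Nsmul_zmod (N : ℕ) (t : ZMod N) : (N : ℤ) • t = 0 := by
  rw [zsmul_eq_mul]
  push_cast
  rw [ZMod.natCast_self, zero_mul]

section Pairing

variable (ℓ : ℂ →ₗ[ℚ] ℚ) (D N : ℕ) {A B C : Submodule ℤ ℂ}

/-- The pairing at the level of `A` and `B`. -/
noncomputable def pair0
    (Hadd : ∀ x ∈ C, ∀ y ∈ C, lamI ℓ D (x + y) = lamI ℓ D x + lamI ℓ D y)
    (Hsmul : ∀ (z : ℤ), ∀ x ∈ C, lamI ℓ D (z • x) = z * lamI ℓ D x)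
    (hAB : ∀ a ∈ A, ∀ b ∈ B, a * b ∈ C) :
    ↥A →ₗ[ℤ] ↥B →ₗ[ℤ] ZMod N :=
  LinearMap.mk₂ ℤ (fun a b => ((lamI ℓ D ((a : ℂ) * (b : ℂ)) : ℤ) : ZMod N))
    (by
      intro a a' b
      have h1 : ((a + a' : ↥A) : ℂ) * (b : ℂ) = (a : ℂ) * b + (a' : ℂ) * b := by
        rw [Submodule.coe_add, add_mul]
      rw [h1, Hadd _ (hAB _ a.2 _ b.2) _ (hAB _ a'.2 _ b.2)]
      push_cast; ring)
    (by
      intro z a b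
      have h1 : ((z • a : ↥A) : ℂ) * (b : ℂ) = z • ((a : ℂ) * b) := by
        rw [Submodule.coe_smul, smul_mul_assoc]
      rw [h1, Hsmul z _ (hAB _ a.2 _ b.2), zsmul_eq_mul]
      push_cast; ring)
    (by
      intro a b b'
      have h1 : (a : ℂ) * ((b + b' : ↥B) : ℂ) = (a : ℂ) * b + (a : ℂ) * b' := by
        rw [Submodule.coe_add, mul_add]
      rw [h1, Hadd _ (hAB _ a.2 _ b.2) _ (hAB _ a.2 _ b'.2)]
      push_cast; ring)
    (by
      intro z a b
      have h1 : (a : ℂ) * ((z • b : ↥B) : ℂ) = z • ((a : ℂ) * b) := by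
        rw [Submodule.coe_smul, mul_smul_comm]
      rw [h1, Hsmul z _ (hAB _ a.2 _ b.2), zsmul_eq_mul]
      push_cast; ring)

/-- The pairing with the second variable on the quotient. -/
noncomputable def pair1
    (Hadd : ∀ x ∈ C, ∀ y ∈ C, lamI ℓ D (x + y) = lamI ℓ D x + lamI ℓ D y)
    (Hsmul : ∀ (z : ℤ), ∀ x ∈ C, lamI ℓ D (z • x) = z * lamI ℓ D x)
    (hAB : ∀ a ∈ A, ∀ b ∈ B, a * b ∈ C) :
    ↥A →ₗ[ℤ] (↥B ⧸ Nsub N B) →ₗ[ℤ] ZMod N where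
  toFun a := Submodule.liftQ (Nsub N B) (pair0 ℓ D N Hadd Hsmul hAB a)
    (by
      rintro x ⟨b, rfl⟩
      simp only [LinearMap.mem_ker, LinearMap.smul_apply, LinearMap.id_coe, id_eq, map_smul]
      exact Nsmul_zmod N _)
  map_add' a a' := by
    apply Submodule.linearMap_qext
    ext b
    simp [map_add]
  map_smul' z a := by
    apply Submodule.linearMap_qext
    ext b
    simp [map_smul]

/-- The pairing on the quotients. -/
noncomputable def pairQ
    (Hadd : ∀ x ∈ C, ∀ y ∈ C, lamI ℓ D (x + y) = lamI ℓ D x + lamI ℓ D y)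
    (Hsmul : ∀ (z : ℤ), ∀ x ∈ C, lamI ℓ D (z • x) = z * lamI ℓ D x)
    (hAB : ∀ a ∈ A, ∀ b ∈ B, a * b ∈ C) :
    (↥A ⧸ Nsub N A) →ₗ[ℤ] (↥B ⧸ Nsub N B) →ₗ[ℤ] ZMod N :=
  Submodule.liftQ (Nsub N A) (pair1 ℓ D N Hadd Hsmul hAB)
    (by
      rintro x ⟨a, rfl⟩
      simp only [LinearMap.mem_ker, LinearMap.smul_apply, LinearMap.id_coe, id_eq, map_smul]
      apply LinearMap.ext
      intro qb
      rw [LinearMap.smul_apply, Nsmul_zmod]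
      rfl)

theorem pairQ_mk
    (Hadd : ∀ x ∈ C, ∀ y ∈ C, lamI ℓ D (x + y) = lamI ℓ D x + lamI ℓ D y)
    (Hsmul : ∀ (z : ℤ), ∀ x ∈ C, lamI ℓ D (z • x) = z * lamI ℓ D x)
    (hAB : ∀ a ∈ A, ∀ b ∈ B, a * b ∈ C) (a : ↥A) (b : ↥B) :
    pairQ ℓ D N Hadd Hsmul hAB (Submodule.Quotient.mk a) (Submodule.Quotient.mk b)
      = ((lamI ℓ D ((a : ℂ) * (b : ℂ)) : ℤ) : ZMod N) := rfl

end Pairing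

theorem finite_quotN (N : ℕ) (hN : N ≠ 0) (A : Submodule ℤ ℂ) (hfin : Module.Finite ℤ ↥A) :
    Finite (↥A ⧸ Nsub N A) := by
  haveI := hfin
  haveI := Module.Finite.quotient ℤ (Nsub N A)
  refine Module.finite_of_fg_torsion _ ?_
  intro x
  obtain ⟨a, rfl⟩ := Submodule.Quotient.mk_surjective _ x
  refine ⟨⟨(N : ℤ), mem_nonZeroDivisors_of_ne_zero (by exact_mod_cast hN)⟩, ?_⟩
  rw [Submonoid.mk_smul, ← Submodule.Quotient.mk_smul]
  exact (Submodule.Quotient.mk_eq_zero _).mpr ⟨a, rfl⟩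


/-! ### The key construction -/

theorem aux_detect (hfg : Group.FG G)
    (r : ℕ) (φ ψ : Fin r → G → ℂ)
    (hφ : ∀ i (g h : G), φ i (g * h) = φ i g + φ i h)
    (hψ : ∀ i (g h : G), ψ i (g * h) = ψ i g + ψ i h)
    (u : G → ℂ)
    (hσ : ∀ g h : G, (c.σ g h : ℂ) = (∑ i, φ i g * ψ i h) + u g + u h - u (g * h))
    (n : ℕ) (hn : 0 < n) :
    ∃ (F : Type) (_ : Group F) (_ : Finite F) (f : CentralExt c →* F),
      f (central c (n : ℤ)) = 1 ∧
      ∀ m : ℤ, ¬ ((n : ℤ) ∣ m) → f (central c m) ≠ 1 := by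
  classical
  -- basic additivity facts
  have hφ1 : ∀ i, φ i (1 : G) = 0 := fun i => by
    have h := hφ i 1 1; rw [mul_one] at h; exact (left_eq_add.mp h)
  have hψ1 : ∀ i, ψ i (1 : G) = 0 := fun i => by
    have h := hψ i 1 1; rw [mul_one] at h; exact (left_eq_add.mp h)
  have hφinv : ∀ i (g : G), φ i g⁻¹ = -φ i g := fun i g => by
    have h := hφ i g⁻¹ g; rw [inv_mul_cancel, hφ1] at h
    exact eq_neg_of_add_eq_zero_left h.symm
  have hψinv : ∀ i (g : G), ψ i g⁻¹ = -ψ i g := fun i g => by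
    have h := hψ i g⁻¹ g; rw [inv_mul_cancel, hψ1] at h
    exact eq_neg_of_add_eq_zero_left h.symm
  have hu1 : u 1 = 0 := by
    have h := hσ 1 1
    rw [one_mul, c.norm_left] at h
    simp only [hφ1, zero_mul, Finset.sum_const_zero, Int.cast_zero] at h
    linear_combination -h
  -- generators
  obtain ⟨Sset, hScl, hSfin⟩ := Group.fg_iff.mp hfg
  -- the finitely generated subgroups of ℂ
  set sa : Set ℂ := ⋃ i : Fin r, φ i '' Sset with hsa_def
  set sb : Set ℂ := ⋃ i : Fin r, ψ i '' Sset with hsb_def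
  set sc : Set ℂ := insert 1 ((u '' Sset) ∪ Set.image2 (· * ·) sa sb) with hsc_def
  have hsaf : sa.Finite := Set.finite_iUnion fun i => hSfin.image _
  have hsbf : sb.Finite := Set.finite_iUnion fun i => hSfin.image _
  have hscf : sc.Finite := ((hSfin.image u).union (hsaf.image2 _ hsbf)).insert 1
  set A : Submodule ℤ ℂ := Submodule.span ℤ sa with hA_def
  set B : Submodule ℤ ℂ := Submodule.span ℤ sb with hB_def
  set C : Submodule ℤ ℂ := Submodule.span ℤ sc with hC_def
  -- products of A and B lie in C
  have hgen : ∀ x ∈ sa, ∀ y ∈ sb, x * y ∈ C :=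
    fun x hx y hy => Submodule.subset_span
      (Set.mem_insert_of_mem _ (Set.mem_union_right _ (Set.mem_image2_of_mem hx hy)))
  have hA1 : ∀ y ∈ sb, ∀ a ∈ A, a * y ∈ C := by
    intro y hy a ha
    induction ha using Submodule.span_induction with
    | mem x hx => exact hgen x hx y hy
    | zero => rw [zero_mul]; exact zero_mem _
    | add x x' hx hx' ihx ihx' => rw [add_mul]; exact add_mem ihx ihx'
    | smul z x hx ihx => rw [smul_mul_assoc]; exact Submodule.smul_mem _ z ihx
  have hAB : ∀ a ∈ A, ∀ b ∈ B, a * b ∈ C := by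
    intro a ha b hb
    induction hb using Submodule.span_induction with
    | mem y hy => exact hA1 y hy a ha
    | zero => rw [mul_zero]; exact zero_mem _
    | add x x' hx hx' ihx ihx' => rw [mul_add]; exact add_mem ihx ihx'
    | smul z x hx ihx => rw [mul_smul_comm]; exact Submodule.smul_mem _ z ihx
  have hC1 : (1 : ℂ) ∈ C := Submodule.subset_span (Set.mem_insert _ _)
  have hCint : ∀ m : ℤ, ((m : ℤ) : ℂ) ∈ C := fun m => by
    have h := Submodule.smul_mem C m hC1
    rwa [zsmul_eq_mul, mul_one] at h
  -- all the values lie in the spans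
  have hmem : ∀ g : G, u g ∈ C ∧ (∀ i, φ i g ∈ A) ∧ (∀ i, ψ i g ∈ B) := by
    intro g
    have hg : g ∈ Subgroup.closure Sset := by rw [hScl]; exact Subgroup.mem_top g
    induction hg using Subgroup.closure_induction with
    | mem x hx =>
        refine ⟨Submodule.subset_span
            (Set.mem_insert_of_mem _ (Set.mem_union_left _ (Set.mem_image_of_mem u hx))),
          fun i => Submodule.subset_span (Set.mem_iUnion.mpr ⟨i, Set.mem_image_of_mem _ hx⟩),
          fun i => Submodule.subset_span (Set.mem_iUnion.mpr ⟨i, Set.mem_image_of_mem _ hx⟩)⟩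
    | one =>
        exact ⟨by rw [hu1]; exact zero_mem _, fun i => by rw [hφ1]; exact zero_mem _,
          fun i => by rw [hψ1]; exact zero_mem _⟩
    | mul x y hx hy ihx ihy =>
        obtain ⟨hux, hφx, hψx⟩ := ihx
        obtain ⟨huy, hφy, hψy⟩ := ihy
        refine ⟨?_, fun i => by rw [hφ i x y]; exact add_mem (hφx i) (hφy i),
          fun i => by rw [hψ i x y]; exact add_mem (hψx i) (hψy i)⟩
        have hux2 : u (x * y) = (∑ i, φ i x * ψ i y) + u x + u y - ((c.σ x y : ℤ) : ℂ) := by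
          linear_combination hσ x y
        rw [hux2]
        exact sub_mem (add_mem (add_mem
          (Submodule.sum_mem _ fun i _ => hAB _ (hφx i) _ (hψy i)) hux) huy) (hCint _)
    | inv x hx ihx =>
        obtain ⟨hux, hφx, hψx⟩ := ihx
        refine ⟨?_, fun i => by rw [hφinv]; exact neg_mem (hφx i),
          fun i => by rw [hψinv]; exact neg_mem (hψx i)⟩
        have h := hσ x⁻¹ x
        rw [inv_mul_cancel, hu1] at h
        have hsum : (∑ i, φ i x⁻¹ * ψ i x) = -∑ i, φ i x * ψ i x := by
          simp [hφinv, neg_mul, Finset.sum_neg_distrib]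
        have hux2 : u x⁻¹ = ((c.σ x⁻¹ x : ℤ) : ℂ) + (∑ i, φ i x * ψ i x) - u x := by
          linear_combination -h - hsum
        rw [hux2]
        exact sub_mem (add_mem (hCint _)
          (Submodule.sum_mem _ fun i _ => hAB _ (hφx i) _ (hψx i))) hux
  have hφA : ∀ (g : G) i, φ i g ∈ A := fun g i => (hmem g).2.1 i
  have hψB : ∀ (g : G) i, ψ i g ∈ B := fun g i => (hmem g).2.2 i
  have huC : ∀ g : G, u g ∈ C := fun g => (hmem g).1
  -- the linear functional
  obtain ⟨ℓ, hℓ1⟩ : ∃ ℓ : ℂ →ₗ[ℚ] ℚ, ℓ 1 = 1 := by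
    obtain ⟨g, hg⟩ := LinearMap.exists_extend
      ((LinearEquiv.toSpanNonzeroSingleton ℚ ℂ 1 one_ne_zero).symm.toLinearMap)
    refine ⟨g, ?_⟩
    have h2 := LinearMap.congr_fun hg ⟨(1 : ℂ), Submodule.mem_span_singleton_self 1⟩
    have h3 : (LinearEquiv.toSpanNonzeroSingleton ℚ ℂ 1 one_ne_zero) 1
        = ⟨(1 : ℂ), Submodule.mem_span_singleton_self 1⟩ := by
      ext
      simp [LinearEquiv.toSpanNonzeroSingleton]
    rw [← h3] at h2
    rw [LinearEquiv.coe_toLinearMap, LinearEquiv.symm_apply_apply] at h2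
    simpa using h2
  -- the common denominator
  set D : ℕ := ∏ q ∈ hscf.toFinset.image (fun x => ℓ x), q.den with hD_def
  have hD0 : 0 < D := Finset.prod_pos fun q _ => q.pos
  have hDdvd : ∀ x ∈ sc, (ℓ x).den ∣ D := fun x hx =>
    Finset.dvd_prod_of_mem _ (Finset.mem_image_of_mem _ (hscf.mem_toFinset.mpr hx))
  have hDC : ∀ x ∈ C, ((lamI ℓ D x : ℤ) : ℚ) = (D : ℚ) * ℓ x := by
    intro x hx
    induction hx using Submodule.span_induction with
    | mem x hx =>
        obtain ⟨k, hk⟩ := hDdvd x hx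
        set q := ℓ x with hq_def
        have hq : (q.den : ℚ) * q = (q.num : ℚ) := by
          nth_rewrite 2 [← Rat.num_div_den q]
          field_simp
        have h1 : (D : ℚ) * q = ((k * q.num : ℤ) : ℚ) := by
          rw [hk]; push_cast
          rw [mul_comm (q.den : ℚ) (k : ℚ), mul_assoc, hq]
        show ((((D : ℚ) * q).num : ℤ) : ℚ) = (D : ℚ) * q
        rw [h1, Rat.num_intCast]
    | zero => simp [lamI]
    | add x y hx hy ihx ihy =>
        have h1 : (D : ℚ) * ℓ (x + y) = ((lamI ℓ D x + lamI ℓ D y : ℤ) : ℚ) := by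
          rw [map_add, mul_add, ← ihx, ← ihy]; push_cast; ring
        show ((((D : ℚ) * ℓ (x + y)).num : ℤ) : ℚ) = (D : ℚ) * ℓ (x + y)
        rw [h1, Rat.num_intCast]
    | smul z x hx ihx =>
        have h1 : (D : ℚ) * ℓ (z • x) = ((z * lamI ℓ D x : ℤ) : ℚ) := by
          rw [map_zsmul, zsmul_eq_mul]
          calc (D : ℚ) * ((z : ℚ) * ℓ x) = (z : ℚ) * ((D : ℚ) * ℓ x) := by ring
            _ = (z : ℚ) * ((lamI ℓ D x : ℤ) : ℚ) := by rw [ihx]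
            _ = ((z * lamI ℓ D x : ℤ) : ℚ) := by push_cast; ring
        show ((((D : ℚ) * ℓ (z • x)).num : ℤ) : ℚ) = (D : ℚ) * ℓ (z • x)
        rw [h1, Rat.num_intCast]
  have Hzero : lamI ℓ D 0 = 0 := by simp [lamI]
  have Hadd : ∀ x ∈ C, ∀ y ∈ C, lamI ℓ D (x + y) = lamI ℓ D x + lamI ℓ D y := by
    intro x hx y hy
    have h := hDC _ (add_mem hx hy)
    rw [map_add, mul_add, ← hDC _ hx, ← hDC _ hy] at h
    exact_mod_cast h
  have Hsmul : ∀ (z : ℤ), ∀ x ∈ C, lamI ℓ D (z • x) = z * lamI ℓ D x := by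
    intro z x hx
    have h2 : ((lamI ℓ D (z • x) : ℤ) : ℚ) = ((z * lamI ℓ D x : ℤ) : ℚ) := by
      calc ((lamI ℓ D (z • x) : ℤ) : ℚ) = (D : ℚ) * ℓ (z • x) :=
            hDC _ (Submodule.smul_mem C z hx)
        _ = (z : ℚ) * ((D : ℚ) * ℓ x) := by rw [map_zsmul, zsmul_eq_mul]; ring
        _ = (z : ℚ) * ((lamI ℓ D x : ℤ) : ℚ) := by rw [hDC _ hx]
        _ = ((z * lamI ℓ D x : ℤ) : ℚ) := by push_cast; ring
    exact_mod_cast h2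
  have lam_int : ∀ m : ℤ, lamI ℓ D ((m : ℤ) : ℂ) = (D : ℤ) * m := by
    intro m
    have hl : ℓ ((m : ℤ) : ℂ) = (m : ℚ) := by
      have h1 : ((m : ℤ) : ℂ) = (m : ℚ) • (1 : ℂ) := by
        rw [Rat.smul_def, mul_one]; push_cast; rfl
      rw [h1, map_smul, hℓ1, smul_eq_mul, mul_one]
    have h2 : (D : ℚ) * (m : ℚ) = (((D : ℤ) * m : ℤ) : ℚ) := by push_cast; ring
    show (((D : ℚ) * ℓ ((m : ℤ) : ℂ)).num : ℤ) = (D : ℤ) * m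
    rw [hl, h2, Rat.num_intCast]
  have lam_sum : ∀ (s : Finset (Fin r)) (F : Fin r → ℂ), (∀ i ∈ s, F i ∈ C) →
      lamI ℓ D (∑ i ∈ s, F i) = ∑ i ∈ s, lamI ℓ D (F i) := by
    intro s
    induction s using Finset.cons_induction with
    | empty => intro F _; simpa using Hzero
    | cons a s ha ih =>
        intro F hF
        rw [Finset.sum_cons, Finset.sum_cons,
          Hadd _ (hF a (Finset.mem_cons_self a s)) _
            (Submodule.sum_mem _ fun i hi => hF i (Finset.mem_cons_of_mem hi)),
          ih F (fun i hi => hF i (Finset.mem_cons_of_mem hi))]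
  -- the modulus
  set N : ℕ := n * D with hN_def
  have hN0 : N ≠ 0 := Nat.mul_ne_zero hn.ne' hD0.ne'
  haveI : NeZero N := ⟨hN0⟩
  haveI instMFA : Module.Finite ℤ ↥A := Module.Finite.iff_fg.mpr (Submodule.fg_span hsaf)
  haveI instMFB : Module.Finite ℤ ↥B := Module.Finite.iff_fg.mpr (Submodule.fg_span hsbf)
  haveI finQA : Finite (↥A ⧸ Nsub N A) := finite_quotN N hN0 A instMFA
  haveI finQB : Finite (↥B ⧸ Nsub N B) := finite_quotN N hN0 B instMFB
  -- the pairing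
  set p : (↥A ⧸ Nsub N A) →ₗ[ℤ] (↥B ⧸ Nsub N B) →ₗ[ℤ] ZMod N :=
    pairQ ℓ D N Hadd Hsmul hAB with hp_def
  set P : (Fin r → ↥A ⧸ Nsub N A) →+ (Fin r → ↥B ⧸ Nsub N B) →+ ZMod N :=
    AddMonoidHom.mk' (fun a => AddMonoidHom.mk'
      (fun b => ∑ i, p (a i) (b i))
      (fun b b' => by
        rw [← Finset.sum_add_distrib]
        exact Finset.sum_congr rfl fun i _ => by rw [Pi.add_apply, map_add]))
    (fun a a' => by
      apply AddMonoidHom.ext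
      intro b
      show ∑ i, p ((a + a') i) (b i) = ∑ i, p (a i) (b i) + ∑ i, p (a' i) (b i)
      rw [← Finset.sum_add_distrib]
      exact Finset.sum_congr rfl fun i _ => by
        rw [Pi.add_apply, map_add, LinearMap.add_apply]) with hP_def
  refine ⟨Heis (ZMod N) (Fin r → ↥A ⧸ Nsub N A) (Fin r → ↥B ⧸ Nsub N B) P,
    inferInstance, inferInstance,
    MonoidHom.mk' (fun x =>
      ((((lamI ℓ D ((x.1 : ℂ) + u x.2) : ℤ) : ZMod N),
        fun i => Submodule.Quotient.mk ⟨φ i x.2, hφA x.2 i⟩,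
        fun i => Submodule.Quotient.mk ⟨ψ i x.2, hψB x.2 i⟩)
        : ZMod N × (Fin r → ↥A ⧸ Nsub N A) × (Fin r → ↥B ⧸ Nsub N B))) ?_, ?_, ?_⟩
  · -- multiplicativity
    rintro ⟨m, g⟩ ⟨m', g'⟩
    show ((((lamI ℓ D (((m + m' + c.σ g g' : ℤ) : ℂ) + u (g * g')) : ℤ) : ZMod N),
        fun i => Submodule.Quotient.mk ⟨φ i (g * g'), hφA (g * g') i⟩,
        fun i => Submodule.Quotient.mk ⟨ψ i (g * g'), hψB (g * g') i⟩)
        : ZMod N × (Fin r → ↥A ⧸ Nsub N A) × (Fin r → ↥B ⧸ Nsub N B))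
      = (((lamI ℓ D (((m : ℤ) : ℂ) + u g) : ℤ) : ZMod N)
          + ((lamI ℓ D (((m' : ℤ) : ℂ) + u g') : ℤ) : ZMod N)
          + P (fun i => Submodule.Quotient.mk ⟨φ i g, hφA g i⟩)
              (fun i => Submodule.Quotient.mk ⟨ψ i g', hψB g' i⟩),
        (fun i => Submodule.Quotient.mk ⟨φ i g, hφA g i⟩)
          + (fun i => Submodule.Quotient.mk ⟨φ i g', hφA g' i⟩),
        (fun i => Submodule.Quotient.mk ⟨ψ i g, hψB g i⟩)
          + (fun i => Submodule.Quotient.mk ⟨ψ i g', hψB g' i⟩))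
    have hP2 : P (fun i => Submodule.Quotient.mk ⟨φ i g, hφA g i⟩)
        (fun i => Submodule.Quotient.mk ⟨ψ i g', hψB g' i⟩)
        = ((∑ i, lamI ℓ D (φ i g * ψ i g') : ℤ) : ZMod N) := by
      show (∑ i, p (Submodule.Quotient.mk ⟨φ i g, hφA g i⟩)
          (Submodule.Quotient.mk ⟨ψ i g', hψB g' i⟩)) = _
      rw [hp_def]
      simp only [pairQ_mk]
      push_cast
      rfl
    refine Prod.ext ?_ (Prod.ext ?_ ?_)
    · show ((lamI ℓ D (((m + m' + c.σ g g' : ℤ) : ℂ) + u (g * g')) : ℤ) : ZMod N) = _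
      have hX : ((m : ℤ) : ℂ) + u g ∈ C := add_mem (hCint m) (huC g)
      have hY : ((m' : ℤ) : ℂ) + u g' ∈ C := add_mem (hCint m') (huC g')
      have hZ : (∑ i, φ i g * ψ i g') ∈ C :=
        Submodule.sum_mem _ fun i _ => hAB _ (hφA g i) _ (hψB g' i)
      have harg : ((m + m' + c.σ g g' : ℤ) : ℂ) + u (g * g')
          = (((m : ℤ) : ℂ) + u g) + ((((m' : ℤ) : ℂ) + u g') + ∑ i, φ i g * ψ i g') := by
        push_cast
        linear_combination hσ g g'
      have hbig : lamI ℓ D (((m + m' + c.σ g g' : ℤ) : ℂ) + u (g * g'))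
          = lamI ℓ D (((m : ℤ) : ℂ) + u g)
            + (lamI ℓ D (((m' : ℤ) : ℂ) + u g') + ∑ i, lamI ℓ D (φ i g * ψ i g')) := by
        rw [harg, Hadd _ hX _ (add_mem hY hZ), Hadd _ hY _ hZ,
          lam_sum Finset.univ _ (fun i _ => hAB _ (hφA g i) _ (hψB g' i))]
      rw [hbig, hP2]
      push_cast
      ring
    · refine funext fun i => ?_
      show (Submodule.Quotient.mk (⟨φ i (g * g'), hφA (g * g') i⟩ : ↥A) : ↥A ⧸ Nsub N A)
        = Submodule.Quotient.mk (⟨φ i g, hφA g i⟩ : ↥A) + Submodule.Quotient.mk (⟨φ i g', hφA g' i⟩ : ↥A)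
      rw [← Submodule.Quotient.mk_add]
      exact congrArg _ (Subtype.ext (hφ i g g'))
    · refine funext fun i => ?_
      show (Submodule.Quotient.mk (⟨ψ i (g * g'), hψB (g * g') i⟩ : ↥B) : ↥B ⧸ Nsub N B)
        = Submodule.Quotient.mk (⟨ψ i g, hψB g i⟩ : ↥B) + Submodule.Quotient.mk (⟨ψ i g', hψB g' i⟩ : ↥B)
      rw [← Submodule.Quotient.mk_add]
      exact congrArg _ (Subtype.ext (hψ i g g'))
  · -- kills the central element (n, 1)
    show ((((lamI ℓ D (((n : ℤ) : ℂ) + u 1) : ℤ) : ZMod N),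
        fun i => Submodule.Quotient.mk (⟨φ i (1 : G), hφA 1 i⟩ : ↥A),
        fun i => Submodule.Quotient.mk (⟨ψ i (1 : G), hψB 1 i⟩ : ↥B))
        : ZMod N × (Fin r → ↥A ⧸ Nsub N A) × (Fin r → ↥B ⧸ Nsub N B))
      = ((0, 0, 0) : ZMod N × (Fin r → ↥A ⧸ Nsub N A) × (Fin r → ↥B ⧸ Nsub N B))
    refine Prod.ext ?_ (Prod.ext ?_ ?_)
    · show ((lamI ℓ D (((n : ℤ) : ℂ) + u 1) : ℤ) : ZMod N) = 0
      rw [hu1, add_zero, lam_int]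
      have h1 : (D : ℤ) * (n : ℤ) = ((N : ℕ) : ℤ) := by rw [hN_def]; push_cast; ring
      rw [h1]
      simp
    · refine funext fun i => ?_
      show Submodule.Quotient.mk (⟨φ i (1 : G), hφA 1 i⟩ : ↥A) = (0 : ↥A ⧸ Nsub N A)
      have h0 : (⟨φ i (1 : G), hφA 1 i⟩ : ↥A) = 0 := Subtype.ext (hφ1 i)
      rw [h0]
      exact (Submodule.Quotient.mk_eq_zero _).mpr (zero_mem _)
    · refine funext fun i => ?_
      show Submodule.Quotient.mk (⟨ψ i (1 : G), hψB 1 i⟩ : ↥B) = (0 : ↥B ⧸ Nsub N B)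
      have h0 : (⟨ψ i (1 : G), hψB 1 i⟩ : ↥B) = 0 := Subtype.ext (hψ1 i)
      rw [h0]
      exact (Submodule.Quotient.mk_eq_zero _).mpr (zero_mem _)
  · -- detects the central elements not in nℤ
    intro m hm hmeq
    have h1 : ((lamI ℓ D (((m : ℤ) : ℂ) + u 1) : ℤ) : ZMod N) = (0 : ZMod N) :=
      congrArg Prod.fst hmeq
    rw [hu1, add_zero, lam_int] at h1
    rw [ZMod.intCast_zmod_eq_zero_iff_dvd] at h1
    obtain ⟨k, hk⟩ := h1
    have hDne : (D : ℤ) ≠ 0 := by exact_mod_cast hD0.ne'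
    refine hm ⟨k, mul_left_cancel₀ hDne ?_⟩
    rw [hk, hN_def]
    push_cast
    ring

end RFAux

/-- If `G` is a finitely generated residually finite group, `σ` is a normalized
`ℤ`-valued 2-cocycle on `G` whose image in `H²(G,ℂ)` is a sum of cup products of
degree-one classes (expressed at the level of cocycles via the coboundary of `u`),
then for every positive integer `n` the quotient of the central extension `ℤ ×_σ G`
by the central subgroup `nℤ × {1}` is residually finite. -/
theorem residuallyFinite_centralExt_quotient
    {G : Type} [Group G] (hfg : Group.FG G) (hrf : ResiduallyFinite G)
    (c : IntCocycle G) (r : ℕ) (φ ψ : Fin r → G → ℂ)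
    (hφ : ∀ i (g h : G), φ i (g * h) = φ i g + φ i h)
    (hψ : ∀ i (g h : G), ψ i (g * h) = ψ i g + ψ i h)
    (u : G → ℂ)
    (hσ : ∀ g h : G, (c.σ g h : ℂ) = (∑ i, φ i g * ψ i h) + u g + u h - u (g * h))
    (n : ℕ) (hn : 0 < n) :
    ResiduallyFinite
      (CentralExt c ⧸ Subgroup.zpowers (CentralExt.central c (n : ℤ))) := by
  intro k hk
  obtain ⟨x, rfl⟩ := QuotientGroup.mk_surjective k
  obtain ⟨m, g⟩ := x
  by_cases hg : g = (1 : G)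
  · subst hg
    have hx1 : ((m, 1) : ℤ × G) = CentralExt.central c m := rfl
    have hnot : ¬ ((n : ℤ) ∣ m) := by
      rintro ⟨k', hk'⟩
      apply hk
      refine (QuotientGroup.eq_one_iff (N := Subgroup.zpowers (CentralExt.central c (n : ℤ)))
        (x := ((m, 1) : CentralExt c))).mpr ?_
      exact ⟨k', by
        show CentralExt.central c (n : ℤ) ^ k' = ((m, 1) : CentralExt c)
        rw [RFAux.central_zpow, ← hk']
        rfl⟩
    obtain ⟨F, instG, instF, f, hf1, hf2⟩ := RFAux.aux_detect c hfg r φ ψ hφ hψ u hσ n hn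
    refine ⟨F, instG, instF, QuotientGroup.lift _ f ?_, ?_⟩
    · intro y hy
      rw [MonoidHom.mem_ker]
      obtain ⟨k', rfl⟩ := hy
      rw [map_zpow, hf1, one_zpow]
    · show f ((m, 1) : CentralExt c) ≠ 1
      exact hf2 m hnot
  · obtain ⟨F, instG, instF, h, hne⟩ := hrf g hg
    refine ⟨F, instG, instF, QuotientGroup.lift _ (h.comp (RFAux.projHom c)) ?_, ?_⟩
    · intro y hy
      rw [MonoidHom.mem_ker]
      obtain ⟨k', rfl⟩ := hy
      rw [MonoidHom.comp_apply, map_zpow, RFAux.projHom_central, one_zpow, map_one]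
    · show (h.comp (RFAux.projHom c)) ((m, g) : CentralExt c) ≠ 1
      exact hne
end

section
/- Let G be a finitely generated group and let σ : G × G → ℤ be a normalized 2-cocycle (σ(g,h) + σ(gh,k) = σ(h,k) + σ(g,hk) and σ(1,g) = σ(g,1) = 0), with associated central extension G̃ = ℤ ×_σ G. Suppose there exist group homomorphisms φ₁,…,φ_r, ψ₁,…,ψ_r : G → (ℂ,+) and a function u : G → ℂ such that σ(g,h) = Σᵢ φᵢ(g)ψᵢ(h) + u(g) + u(h) − u(gh) for all g,h ∈ G. Then there exist a finitely generated nilpotent group Δ and an injective group homomorphism from G̃ into the direct product Δ × G. -/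
/-- A Heisenberg-type group on `ℂ^r × ℂ^r × ℂ`. -/
def Heis (r : ℕ) : Type := (Fin r → ℂ) × (Fin r → ℂ) × ℂ

namespace Heis

variable {r : ℕ}

noncomputable instance : Group (Heis r) where
  mul x y := ((x.1 + y.1, x.2.1 + y.2.1, x.2.2 + y.2.2 + ∑ i, x.1 i * y.2.1 i) :
    (Fin r → ℂ) × (Fin r → ℂ) × ℂ)
  one := ((0, 0, 0) : (Fin r → ℂ) × (Fin r → ℂ) × ℂ)
  inv x := ((-x.1, -x.2.1, -x.2.2 + ∑ i, x.1 i * x.2.1 i) : (Fin r → ℂ) × (Fin r → ℂ) × ℂ)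
  mul_assoc x y z := by
    refine Prod.ext ?_ (Prod.ext ?_ ?_)
    · show x.1 + y.1 + z.1 = x.1 + (y.1 + z.1); ring
    · show x.2.1 + y.2.1 + z.2.1 = x.2.1 + (y.2.1 + z.2.1); ring
    · show x.2.2 + y.2.2 + (∑ i, x.1 i * y.2.1 i) + z.2.2
          + ∑ i, (x.1 i + y.1 i) * z.2.1 i
        = x.2.2 + (y.2.2 + z.2.2 + ∑ i, y.1 i * z.2.1 i)
          + ∑ i, x.1 i * (y.2.1 i + z.2.1 i)
      simp only [add_mul, mul_add, Finset.sum_add_distrib]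
      ring
  one_mul x := by
    refine Prod.ext ?_ (Prod.ext ?_ ?_)
    · show 0 + x.1 = x.1; ring
    · show 0 + x.2.1 = x.2.1; ring
    · show (0 : ℂ) + x.2.2 + ∑ i, (0 : Fin r → ℂ) i * x.2.1 i = x.2.2
      simp
  mul_one x := by
    refine Prod.ext ?_ (Prod.ext ?_ ?_)
    · show x.1 + 0 = x.1; ring
    · show x.2.1 + 0 = x.2.1; ring
    · show x.2.2 + (0 : ℂ) + ∑ i, x.1 i * (0 : Fin r → ℂ) i = x.2.2
      simp
  inv_mul_cancel x := by
    refine Prod.ext ?_ (Prod.ext ?_ ?_)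
    · show -x.1 + x.1 = 0; ring
    · show -x.2.1 + x.2.1 = 0; ring
    · show -x.2.2 + (∑ i, x.1 i * x.2.1 i) + x.2.2 + ∑ i, (-x.1) i * x.2.1 i = (0 : ℂ)
      simp [Pi.neg_apply, neg_mul, Finset.sum_neg_distrib]

theorem mem_center (x : Heis r) (h1 : x.1 = 0) (h2 : x.2.1 = 0) :
    x ∈ Subgroup.center (Heis r) := by
  rw [Subgroup.mem_center_iff]
  intro y
  refine Prod.ext ?_ (Prod.ext ?_ ?_)
  · show y.1 + x.1 = x.1 + y.1; ring
  · show y.2.1 + x.2.1 = x.2.1 + y.2.1; ring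
  · show y.2.2 + x.2.2 + ∑ i, y.1 i * x.2.1 i = x.2.2 + y.2.2 + ∑ i, x.1 i * y.2.1 i
    rw [h1, h2]
    simp [add_comm]

instance : Group.IsNilpotent (Heis r) := by
  rw [nilpotent_iff_lowerCentralSeries]
  refine ⟨2, lowerCentralSeries_succ_eq_bot ⊤ ?_⟩
  rw [Subgroup.lowerCentralSeries_succ, Subgroup.lowerCentralSeries_zero, Subgroup.commutator_def]
  rw [Subgroup.closure_le]
  rintro w ⟨p, -, q, -, rfl⟩
  refine mem_center _ ?_ ?_
  · show p.1 + q.1 + -p.1 + -q.1 = 0; ring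
  · show p.2.1 + q.2.1 + -p.2.1 + -q.2.1 = 0; ring

end Heis

namespace CentralExt

variable {G : Type*} [Group G] (c : IntCocycle G)

/-- The element `(m, g)` of the central extension. -/
def mk (m : ℤ) (g : G) : CentralExt c := ((m, g) : ℤ × G)

theorem fg (hfg : Group.FG G) : Group.FG (CentralExt c) := by
  obtain ⟨S, hS, hSfin⟩ := Group.fg_iff.mp hfg
  rw [Group.fg_iff]
  refine ⟨(fun g => ((0, g) : ℤ × G)) '' S ∪ {((1, 1) : ℤ × G)}, ?_,
    (hSfin.image _).union (Set.finite_singleton _)⟩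
  set H : Subgroup (CentralExt c) :=
    Subgroup.closure ((fun g => ((0, g) : ℤ × G)) '' S ∪ {((1, 1) : ℤ × G)}) with hH
  have h11 : (CentralExt.mk c 1 1) ∈ H :=
    Subgroup.subset_closure (Set.mem_union_right _ rfl)
  have hcent : ∀ m : ℤ, (CentralExt.mk c m 1) ∈ H := by
    intro m
    induction m using Int.induction_on with
    | zero => exact H.one_mem
    | succ n ih =>
      have key : (CentralExt.mk c ((n : ℤ) + 1) 1)
          = (CentralExt.mk c (n : ℤ) 1) * (CentralExt.mk c 1 1) := by
        refine Prod.ext ?_ ?_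
        · show (n : ℤ) + 1 = (n : ℤ) + 1 + c.σ (1 : G) 1
          rw [c.norm_right]; ring
        · exact (one_mul (1 : G)).symm
      rw [key]; exact H.mul_mem ih h11
    | pred n ih =>
      have key : (CentralExt.mk c (-(n : ℤ) - 1) 1)
          = (CentralExt.mk c (-(n : ℤ)) 1) * (CentralExt.mk c 1 1)⁻¹ := by
        refine Prod.ext ?_ ?_
        · show -(n : ℤ) - 1 = -(n : ℤ) + (-(1 : ℤ) - c.σ (1 : G)⁻¹ 1) + c.σ (1 : G) ((1 : G)⁻¹)
          rw [inv_one, c.norm_left]; ring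
        · show (1 : G) = 1 * (1 : G)⁻¹
          rw [inv_one, mul_one]
      rw [key]; exact H.mul_mem ih (H.inv_mem h11)
  have hg : ∀ g : G, (CentralExt.mk c 0 g) ∈ H := by
    intro g
    have hgmem : g ∈ Subgroup.closure S := hS ▸ Subgroup.mem_top g
    induction hgmem using Subgroup.closure_induction with
    | mem x hx => exact Subgroup.subset_closure (Set.mem_union_left _ ⟨x, hx, rfl⟩)
    | one => exact H.one_mem
    | mul x y _ _ ihx ihy =>
      have key : (CentralExt.mk c 0 (x * y))
          = (CentralExt.mk c (-(c.σ x y)) 1)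
            * ((CentralExt.mk c 0 x) * (CentralExt.mk c 0 y)) := by
        refine Prod.ext ?_ ?_
        · show (0 : ℤ) = -(c.σ x y) + ((0 : ℤ) + 0 + c.σ x y) + c.σ (1 : G) (x * y)
          rw [c.norm_left]; ring
        · exact (one_mul (x * y)).symm
      rw [key]; exact H.mul_mem (hcent _) (H.mul_mem ihx ihy)
    | inv x _ ihx =>
      have key : (CentralExt.mk c 0 x⁻¹)
          = (CentralExt.mk c (c.σ x⁻¹ x) 1) * (CentralExt.mk c 0 x)⁻¹ := by
        refine Prod.ext ?_ ?_
        · show (0 : ℤ) = c.σ x⁻¹ x + (-(0 : ℤ) - c.σ x⁻¹ x) + c.σ (1 : G) x⁻¹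
          rw [c.norm_left]; ring
        · exact (one_mul x⁻¹).symm
      rw [key]; exact H.mul_mem (hcent _) (H.inv_mem ihx)
  rw [eq_top_iff]
  intro x _
  have key : x = (CentralExt.mk c x.1 1) * (CentralExt.mk c 0 x.2) := by
    refine Prod.ext ?_ ?_
    · show x.1 = x.1 + 0 + c.σ (1 : G) x.2
      rw [c.norm_left]; ring
    · exact (one_mul x.2).symm
  rw [key]; exact H.mul_mem (hcent _) (hg _)

end CentralExt

/-- If `G` is a finitely generated group and `σ` is a normalized `ℤ`-valued 2-cocycle
on `G` which, viewed in `ℂ`, differs by a coboundary from a sum of cup products of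
additive characters, then the central extension `ℤ ×_σ G` embeds into a direct product
`Δ × G` with `Δ` a finitely generated nilpotent group. -/
theorem centralExt_embeds_nilpotent_prod
    {G : Type} [Group G] (hfg : Group.FG G)
    (c : IntCocycle G) (r : ℕ) (φ ψ : Fin r → G → ℂ)
    (hφ : ∀ i (g h : G), φ i (g * h) = φ i g + φ i h)
    (hψ : ∀ i (g h : G), ψ i (g * h) = ψ i g + ψ i h)
    (u : G → ℂ)
    (hσ : ∀ g h : G, (c.σ g h : ℂ) = (∑ i, φ i g * ψ i h) + u g + u h - u (g * h)) :
    ∃ (Δ : Type) (_ : Group Δ), Group.FG Δ ∧ Group.IsNilpotent Δ ∧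
      ∃ f : CentralExt c →* Δ × G, Function.Injective f := by
  haveI : Group.FG (CentralExt c) := CentralExt.fg c hfg
  let δ : CentralExt c →* Heis r := MonoidHom.mk'
    (fun x => (((fun i => φ i x.2), (fun i => ψ i x.2), ((x.1 : ℂ) + u x.2)) :
      (Fin r → ℂ) × (Fin r → ℂ) × ℂ))
    (by
      intro a b
      refine Prod.ext ?_ (Prod.ext ?_ ?_)
      · funext i
        show φ i (a.2 * b.2) = φ i a.2 + φ i b.2
        exact hφ i a.2 b.2
      · funext i
        show ψ i (a.2 * b.2) = ψ i a.2 + ψ i b.2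
        exact hψ i a.2 b.2
      · show ((a.1 + b.1 + c.σ a.2 b.2 : ℤ) : ℂ) + u (a.2 * b.2)
          = ((a.1 : ℂ) + u a.2) + ((b.1 : ℂ) + u b.2) + ∑ i, φ i a.2 * ψ i b.2
        push_cast
        linear_combination hσ a.2 b.2)
  let π : CentralExt c →* G := MonoidHom.mk' (fun x => x.2) (fun _ _ => rfl)
  refine ⟨δ.range, inferInstance, inferInstance, inferInstance,
    δ.rangeRestrict.prod π, ?_⟩
  intro x y hxy
  have h2 : x.2 = y.2 := congrArg (fun p : ↥δ.range × G => p.2) hxy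
  have h1 : δ x = δ y := congrArg (fun p => ((p.1 : δ.range) : Heis r)) hxy
  have h3 : (x.1 : ℂ) + u x.2 = (y.1 : ℂ) + u y.2 := congrArg (fun z => z.2.2) h1
  rw [h2] at h3
  have h4 : (x.1 : ℂ) = (y.1 : ℂ) := by linear_combination h3
  exact Prod.ext (by exact_mod_cast h4) h2
end

section
/- Let f : Γ → Σ be a surjective group homomorphism and let Γ act on a set C. Call a point v ∈ C essential if there exist a finite-index subgroup Σ' ≤ Σ, a group homomorphism φ : Σ' → (ℂ,+), and an element n ∈ f⁻¹(Σ') ∩ Stab_Γ(v) with φ(f(n)) ≠ 0. Assume that the set of essential points of C is the union of finitely many Γ-orbits. Then there exists a single normal subgroup Σ₀ of finite index in Σ such that for every essential point v ∈ C there exist a group homomorphism φ : Σ₀ → (ℂ,+) and an element n ∈ f⁻¹(Σ₀) ∩ Stab_Γ(v) with φ(f(n)) ≠ 0. -/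
/-- Given a group homomorphism `f : Γ → S` and an action of `Γ` on a set `C`, a point
`v ∈ C` is *essential* if there exist a finite-index subgroup `S' ≤ S`, an additive
character `φ : S' → ℂ`, and an element `n ∈ f⁻¹(S') ∩ Stab_Γ(v)` with `φ(f(n)) ≠ 0`. -/
def IsEssential {Γ S C : Type*} [Group Γ] [Group S] [MulAction Γ C]
    (f : Γ →* S) (v : C) : Prop :=
  ∃ S' : Subgroup S, S'.FiniteIndex ∧
    ∃ φ : S' → ℂ, (∀ a b : S', φ (a * b) = φ a + φ b) ∧
      ∃ (n : Γ) (hn : f n ∈ S'), n ∈ MulAction.stabilizer Γ v ∧ φ ⟨f n, hn⟩ ≠ 0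

private lemma addhom_one {S : Type*} [Group S] {S' : Subgroup S} {φ : S' → ℂ}
    (hφ : ∀ a b : S', φ (a * b) = φ a + φ b) : φ 1 = 0 := by
  have h := hφ 1 1
  rw [mul_one] at h
  exact left_eq_add.mp h

private lemma addhom_pow {S : Type*} [Group S] {S' : Subgroup S} {φ : S' → ℂ}
    (hφ : ∀ a b : S', φ (a * b) = φ a + φ b) (a : S') (k : ℕ) :
    φ (a ^ k) = k * φ a := by
  induction k with
  | zero => simpa using addhom_one hφ
  | succ k ih =>
    rw [pow_succ, hφ, ih]
    push_cast
    ring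

/-- If `f : Γ → S` is a surjective group homomorphism, `Γ` acts on a set `C`, and the set
of essential points of `C` is a union of finitely many `Γ`-orbits, then there is a single
normal finite-index subgroup `S₀ ≤ S` such that every essential point admits an additive
character `φ : S₀ → ℂ` and an element `n ∈ f⁻¹(S₀) ∩ Stab_Γ(v)` with `φ(f(n)) ≠ 0`. -/
theorem exists_uniform_subgroup_for_essential_points
    {Γ S C : Type*} [Group Γ] [Group S] [MulAction Γ C]
    (f : Γ →* S) (hf : Function.Surjective f)
    (reps : Finset C)
    (hreps : {v : C | IsEssential f v} = ⋃ w ∈ reps, MulAction.orbit Γ w) :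
    ∃ S₀ : Subgroup S, S₀.Normal ∧ S₀.FiniteIndex ∧
      ∀ v : C, IsEssential f v →
        ∃ φ : S₀ → ℂ, (∀ a b : S₀, φ (a * b) = φ a + φ b) ∧
          ∃ (n : Γ) (hn : f n ∈ S₀),
            n ∈ MulAction.stabilizer Γ v ∧ φ ⟨f n, hn⟩ ≠ 0 := by
  classical
  -- choose a subgroup for each essential point
  set T : C → Subgroup S := fun w => if h : IsEssential f w then h.choose else ⊤ with hT
  have hTfin : ∀ w : C, (T w).FiniteIndex := by
    intro w
    by_cases h : IsEssential f w
    · simp only [hT, dif_pos h]; exact h.choose_spec.1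
    · simp only [hT, dif_neg h]; infer_instance
  set K : Subgroup S := (⨅ w ∈ reps, T w).normalCore with hK
  have hKle : ∀ w ∈ reps, K ≤ T w := fun w hw =>
    le_trans (Subgroup.normalCore_le _) (iInf₂_le w hw)
  have hKnormal : K.Normal := Subgroup.normalCore_normal _
  have hKfin : K.FiniteIndex := by
    have : (⨅ w ∈ reps, T w).FiniteIndex := by
      have : (⨅ w ∈ reps, T w) = ⨅ i : {w // w ∈ reps}, T i := by
        rw [iInf_subtype]
      rw [this]
      exact Subgroup.finiteIndex_iInf fun i => hTfin i
    haveI := this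
    exact Subgroup.finiteIndex_normalCore (H := ⨅ w ∈ reps, T w)
  refine ⟨K, hKnormal, hKfin, ?_⟩
  intro v hv
  -- v lies in the orbit of some representative w, which is essential
  have hvmem : v ∈ ⋃ w ∈ reps, MulAction.orbit Γ w := by rw [← hreps]; exact hv
  obtain ⟨w, hw, hvw⟩ := Set.mem_iUnion₂.mp hvmem
  obtain ⟨g, hg⟩ := hvw  -- g • w = v
  have hwE : IsEssential f w := by
    have : w ∈ ⋃ w ∈ reps, MulAction.orbit Γ w :=
      Set.mem_iUnion₂.mpr ⟨w, hw, MulAction.mem_orbit_self w⟩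
    rw [← hreps] at this; exact this
  obtain ⟨hfin, φ, hφ, n, hn, hnstab, hnne⟩ := hwE.choose_spec
  have hTw : T w = hwE.choose := by simp only [hT, dif_pos hwE]
  have hKS' : K ≤ hwE.choose := hTw ▸ hKle w hw
  set k := K.index with hk
  have hk0 : (k : ℂ) ≠ 0 := by
    exact_mod_cast Nat.cast_ne_zero.mpr hKfin.index_ne_zero
  have hnkK : f (n ^ k) ∈ K := by
    rw [map_pow]
    exact K.pow_index_mem (f n)
  have hfnk : f (n ^ k) ∈ hwE.choose := hKS' hnkK
  have hval : φ ⟨f (n ^ k), hfnk⟩ ≠ 0 := by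
    rw [show (⟨f (n ^ k), hfnk⟩ : hwE.choose) = (⟨f n, hn⟩ : hwE.choose) ^ k from by
      ext; simp [map_pow]]
    rw [addhom_pow hφ]
    exact mul_ne_zero hk0 hnne
  have hconj : ∀ x : K, (f g)⁻¹ * (x : S) * f g ∈ K := by
    intro x
    have := hKnormal.conj_mem (x : S) x.2 (f g)⁻¹
    simpa using this
  refine ⟨fun x => φ ⟨(f g)⁻¹ * (x : S) * f g, hKS' (hconj x)⟩, ?_, g * n ^ k * g⁻¹, ?_, ?_, ?_⟩
  · intro a b
    show φ ⟨(f g)⁻¹ * ((a : S) * b) * f g, hKS' (hconj (a * b))⟩ =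
      φ ⟨(f g)⁻¹ * a * f g, hKS' (hconj a)⟩ + φ ⟨(f g)⁻¹ * b * f g, hKS' (hconj b)⟩
    rw [show (⟨(f g)⁻¹ * ((a : S) * b) * f g, hKS' (hconj (a * b))⟩ : hwE.choose) =
        ⟨(f g)⁻¹ * a * f g, hKS' (hconj a)⟩ * ⟨(f g)⁻¹ * b * f g, hKS' (hconj b)⟩ from by
      ext; simp [mul_assoc]]
    exact hφ _ _
  · simpa using hKnormal.conj_mem (f (n ^ k)) hnkK (f g)
  · have hnk : (n ^ k) • w = w := pow_mem hnstab k
    show (g * n ^ k * g⁻¹) • v = v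
    rw [← hg]
    simp only [mul_smul, inv_smul_smul, hnk]
  · have harg : ((f g)⁻¹ * (f (g * n ^ k * g⁻¹)) * f g) = f (n ^ k) := by
      simp [map_mul, map_inv, mul_assoc]
    show φ ⟨(f g)⁻¹ * f (g * n ^ k * g⁻¹) * f g, _⟩ ≠ 0
    rw [show (⟨(f g)⁻¹ * f (g * n ^ k * g⁻¹) * f g, _⟩ : hwE.choose) = ⟨f (n ^ k), hfnk⟩ from
      Subtype.ext harg]
    exact hval
end

section
/- Let Σ₀ be a finitely generated group and let H₁, …, H_s (with s ≥ 1) be subgroups of Σ₀ such that for each i there exists a group homomorphism φᵢ : Σ₀ → (ℝ,+) which does not vanish identically on Hᵢ. Then there exists a surjective group homomorphism ρ : Σ₀ → ℤ such that for every i = 1, …, s, the homomorphism ρ does not vanish identically on Hᵢ (i.e. ρ(Hᵢ) ≠ {0}). -/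
open Polynomial


/-- Let `Σ₀` (here `S₀`) be a finitely generated group and `H₁, …, H_s` (with `s ≥ 1`)
subgroups such that for each `i` some homomorphism `S₀ → (ℝ, +)` does not vanish
identically on `Hᵢ`.  Then there is a surjective homomorphism `ρ : S₀ → ℤ` not vanishing
identically on any `Hᵢ`. -/
theorem exists_surjective_int_hom_nonvanishing
    {S₀ : Type*} [Group S₀] (hfg : Group.FG S₀)
    (s : ℕ) (hs : 1 ≤ s) (H : Fin s → Subgroup S₀)
    (φ : Fin s → S₀ → ℝ)
    (hφ : ∀ i, ∀ a b : S₀, φ i (a * b) = φ i a + φ i b)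
    (hnv : ∀ i, ∃ h ∈ H i, φ i h ≠ 0) :
    ∃ ρ : S₀ → ℤ, (∀ a b : S₀, ρ (a * b) = ρ a + ρ b) ∧ Function.Surjective ρ ∧
      ∀ i, ∃ h ∈ H i, ρ h ≠ 0 := by
  classical
  have hone : ∀ i, φ i 1 = 0 := by
    intro i
    have := hφ i 1 1
    simp only [one_mul] at this
    linarith
  let Ψ : Additive S₀ →+ (Fin s → ℝ) :=
    { toFun := fun g => fun i => φ i (Additive.toMul g)
      map_zero' := funext fun i => hone i
      map_add' := fun a b => funext fun i => hφ i _ _ }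
  haveI : AddGroup.FG (Additive S₀) := GroupFG.iff_add_fg.1 hfg
  set M : AddSubgroup (Fin s → ℝ) := Ψ.range with hM
  haveI : AddGroup.FG M := AddGroup.fg_of_surjective Ψ.rangeRestrict_surjective
  haveI : Module.Finite ℤ M := Module.Finite.iff_addGroup_fg.mpr ‹_›
  haveI : NoZeroSMulDivisors ℤ M := by
    constructor
    intro c x hcx
    rcases eq_or_ne c 0 with h0 | h0
    · exact Or.inl h0
    · refine Or.inr ?_
      have hval : c • (x : Fin s → ℝ) = 0 := by
        have := congrArg (Subtype.val) hcx
        simpa using this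
      rcases smul_eq_zero.mp hval with h | h
      · exact absurd h h0
      · exact Subtype.ext h
  haveI : Module.Free ℤ M := Module.free_of_finite_type_torsion_free'
  set ι := Module.Free.ChooseBasisIndex ℤ M with hι
  let b : Module.Basis ι ℤ M := Module.Free.chooseBasis ℤ M
  let e : ι → ℕ := fun j => (Fintype.equivFin ι j : ℕ)
  have he : Function.Injective e := fun a b h =>
    (Fintype.equivFin ι).injective (Fin.ext h)
  choose h hmem hne using hnv
  let u : S₀ → M := fun g => ⟨Ψ (Additive.ofMul g), ⟨Additive.ofMul g, rfl⟩⟩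
  have hu : ∀ a b : S₀, u (a * b) = u a + u b := by
    intro a c
    apply Subtype.ext
    show Ψ (Additive.ofMul (a * c)) = Ψ (Additive.ofMul a) + Ψ (Additive.ofMul c)
    rw [← map_add]
    rfl
  have hw : ∀ i, u (h i) ≠ 0 := by
    intro i hzero
    have : (u (h i) : Fin s → ℝ) i = 0 := by rw [hzero]; rfl
    exact hne i this
  -- polynomials
  let P : Fin s → ℤ[X] := fun i => ∑ j : ι, C (b.repr (u (h i)) j) * X ^ (e j)
  have hcoeff : ∀ i j₀, (P i).coeff (e j₀) = b.repr (u (h i)) j₀ := by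
    intro i j₀
    simp only [P, finset_sum_coeff, coeff_C_mul, coeff_X_pow]
    rw [Finset.sum_eq_single j₀]
    · simp
    · intro j _ hj
      rw [if_neg (fun hej => hj (he hej).symm), mul_zero]
    · simp
  have hPne : ∀ i, P i ≠ 0 := by
    intro i hP0
    have hrepr : b.repr (u (h i)) ≠ 0 := by
      intro h0
      exact hw i (by
        have := congrArg (b.repr.symm) h0
        simpa using this)
    obtain ⟨j₀, hj₀⟩ := Finsupp.ne_iff.mp hrepr
    apply hj₀
    have := hcoeff i j₀
    rw [hP0] at this
    simpa using this.symm
  -- choose c avoiding all roots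
  have hfin : (⋃ i : Fin s, {x : ℤ | (P i).IsRoot x}).Finite :=
    Set.finite_iUnion fun i => Polynomial.finite_setOf_isRoot (hPne i)
  obtain ⟨c, hc⟩ := hfin.infinite_compl.nonempty
  simp only [Set.mem_compl_iff, Set.mem_iUnion, not_exists, Set.mem_setOf_eq] at hc
  -- the preliminary homomorphism
  let ρ₀ : S₀ → ℤ := fun g => ∑ j : ι, b.repr (u g) j * c ^ (e j)
  have hρ₀add : ∀ a b' : S₀, ρ₀ (a * b') = ρ₀ a + ρ₀ b' := by
    intro a b'
    simp only [ρ₀, hu, map_add, Finsupp.add_apply, add_mul, Finset.sum_add_distrib]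
  have hρ₀h : ∀ i, ρ₀ (h i) = (P i).eval c := by
    intro i
    simp [ρ₀, P, eval_finset_sum]
  have hρ₀ne : ∀ i, ρ₀ (h i) ≠ 0 := fun i => by rw [hρ₀h i]; exact hc i
  have hρ₀one : ρ₀ 1 = 0 := by
    have := hρ₀add 1 1
    simp only [one_mul] at this
    omega
  have hρ₀inv : ∀ g : S₀, ρ₀ g⁻¹ = - ρ₀ g := by
    intro g
    have := hρ₀add g g⁻¹
    rw [mul_inv_cancel, hρ₀one] at this
    omega
  -- the range of ρ₀ as an AddSubgroup of ℤ
  let R : AddSubgroup ℤ :=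
    { carrier := Set.range ρ₀
      zero_mem' := ⟨1, hρ₀one⟩
      add_mem' := by
        rintro _ _ ⟨a, rfl⟩ ⟨b', rfl⟩
        exact ⟨a * b', hρ₀add a b'⟩
      neg_mem' := by
        rintro _ ⟨a, rfl⟩
        exact ⟨a⁻¹, hρ₀inv a⟩ }
  obtain ⟨d, hd⟩ := Int.subgroup_cyclic R
  have hdvd : ∀ g : S₀, d ∣ ρ₀ g := by
    intro g
    have : ρ₀ g ∈ R := ⟨g, rfl⟩
    rw [hd, AddSubgroup.mem_closure_singleton] at this
    obtain ⟨n, hn⟩ := this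
    have hn' : n * d = ρ₀ g := by simpa using hn
    exact ⟨n, by rw [← hn']; ring⟩
  have i0 : Fin s := ⟨0, hs⟩
  have hdne : d ≠ 0 := by
    intro h0
    apply hρ₀ne i0
    obtain ⟨n, hn⟩ := hdvd (h i0)
    rw [hn, h0, zero_mul]
  refine ⟨fun g => ρ₀ g / d, ?_, ?_, ?_⟩
  · intro a b'
    show ρ₀ (a * b') / d = ρ₀ a / d + ρ₀ b' / d
    obtain ⟨x, hx⟩ := hdvd a
    obtain ⟨y, hy⟩ := hdvd b'
    rw [hρ₀add, hx, hy, ← mul_add, Int.mul_ediv_cancel_left _ hdne,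
      Int.mul_ediv_cancel_left _ hdne, Int.mul_ediv_cancel_left _ hdne]
  · intro k
    have : d * k ∈ R := by
      rw [hd, AddSubgroup.mem_closure_singleton]
      exact ⟨k, by rw [zsmul_eq_mul, Int.cast_id]; ring⟩
    obtain ⟨g, hg⟩ := this
    refine ⟨g, ?_⟩
    show ρ₀ g / d = k
    rw [hg, Int.mul_ediv_cancel_left _ hdne]
  · intro i
    refine ⟨h i, hmem i, ?_⟩
    intro h0
    have h0' : ρ₀ (h i) / d = 0 := h0
    apply hρ₀ne i
    obtain ⟨x, hx⟩ := hdvd (h i)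
    rw [hx, Int.mul_ediv_cancel_left _ hdne] at h0'
    rw [hx, h0', mul_zero]
end

section
/- Let Γ₀ be a group acting on a set C, let v ∈ C, and let χ : Γ₀ → ℤ be a surjective group homomorphism such that χ(Stab_{Γ₀}(v)) ≠ {0}. For each positive integer n set Γₙ = χ⁻¹(nℤ). Then for every n ≥ 1, the number of Γₙ-orbits contained in the Γ₀-orbit of v is finite and is at most the index [ℤ : χ(Stab_{Γ₀}(v))]; in particular this number is bounded independently of n. -/
/-- The subgroup `χ⁻¹(nℤ)` of elements whose image under the homomorphism `χ : Γ₀ → ℤ`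
is divisible by `n`. -/
def kerModN {Γ₀ : Type*} [Group Γ₀] (χ : Γ₀ → ℤ)
    (hχ : ∀ a b : Γ₀, χ (a * b) = χ a + χ b) (n : ℤ) : Subgroup Γ₀ where
  carrier := {g | n ∣ χ g}
  one_mem' := by
    have h := hχ 1 1
    simp only [one_mul] at h
    have h1 : χ (1 : Γ₀) = 0 := by omega
    simp [Set.mem_setOf_eq, h1]
  mul_mem' := by
    intro a b ha hb
    simp only [Set.mem_setOf_eq, hχ] at *
    exact dvd_add ha hb
  inv_mem' := by
    intro a ha
    have h1 : χ (1 : Γ₀) = 0 := by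
      have h := hχ 1 1; simp only [one_mul] at h; omega
    have h := hχ a⁻¹ a
    rw [inv_mul_cancel, h1] at h
    simp only [Set.mem_setOf_eq] at *
    have hinv : χ a⁻¹ = -χ a := by omega
    rw [hinv]
    exact dvd_neg.mpr ha

/-- Let `Γ₀` act on a set `C`, let `χ : Γ₀ → ℤ` be a surjective homomorphism which does
not vanish identically on the stabilizer of `v ∈ C`, and set `Γₙ = χ⁻¹(nℤ)`.  Then for
every `n ≥ 1` the collection of `Γₙ`-orbits contained in the `Γ₀`-orbit of `v` is finite,
of cardinality at most the index `[ℤ : χ(Stab_{Γ₀}(v))]`; in particular it is bounded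
independently of `n`. -/
theorem card_suborbits_le_index
    {Γ₀ C : Type*} [Group Γ₀] [MulAction Γ₀ C] (v : C)
    (χ : Γ₀ → ℤ) (hχ : ∀ a b : Γ₀, χ (a * b) = χ a + χ b)
    (hsurj : Function.Surjective χ)
    (hstab : ∃ g ∈ MulAction.stabilizer Γ₀ v, χ g ≠ 0)
    (n : ℕ) (hn : 0 < n) :
    {T : Set C | ∃ w ∈ MulAction.orbit Γ₀ v,
        T = MulAction.orbit (kerModN χ hχ (n : ℤ)) w}.Finite ∧
      {T : Set C | ∃ w ∈ MulAction.orbit Γ₀ v,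
        T = MulAction.orbit (kerModN χ hχ (n : ℤ)) w}.ncard ≤
      (AddSubgroup.closure
        (χ '' ((MulAction.stabilizer Γ₀ v : Subgroup Γ₀) : Set Γ₀))).index := by
  classical
  set Γn := kerModN χ hχ (n : ℤ) with hΓn
  set St := MulAction.stabilizer Γ₀ v with hSt
  have hχ1 : χ (1 : Γ₀) = 0 := by have := hχ 1 1; simp only [one_mul] at this; omega
  have hχinv : ∀ g : Γ₀, χ g⁻¹ = - χ g := by
    intro g
    have := hχ g⁻¹ g
    rw [inv_mul_cancel, hχ1] at this
    omega
  set B : AddSubgroup ℤ :=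
    { carrier := χ '' (St : Set Γ₀)
      zero_mem' := ⟨1, St.one_mem, hχ1⟩
      add_mem' := by
        rintro a b ⟨s, hs, rfl⟩ ⟨t, ht, rfl⟩
        exact ⟨s * t, St.mul_mem hs ht, hχ s t⟩
      neg_mem' := by
        rintro a ⟨s, hs, rfl⟩
        exact ⟨s⁻¹, St.inv_mem hs, hχinv s⟩ } with hB
  have hclB : AddSubgroup.closure (χ '' (St : Set Γ₀)) = B := AddSubgroup.closure_eq B
  obtain ⟨k, hkB⟩ := Int.subgroup_cyclic B
  have hkB' : B = AddSubgroup.zmultiples k := by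
    rw [hkB, AddSubgroup.zmultiples_eq_closure]
  have hk0 : k ≠ 0 := by
    obtain ⟨g, hg, hgne⟩ := hstab
    have hmem : χ g ∈ B := ⟨g, hg, rfl⟩
    rw [hkB', Int.mem_zmultiples_iff] at hmem
    rintro rfl
    simp at hmem
    exact hgne hmem
  set m : ℕ := Nat.gcd n k.natAbs with hm
  have hm0 : 0 < m := Nat.gcd_pos_of_pos_left _ hn
  have hmn : (m : ℤ) ∣ (n : ℤ) := Int.natCast_dvd_natCast.mpr (Nat.gcd_dvd_left _ _)
  have hmk : (m : ℤ) ∣ k :=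
    (Int.natCast_dvd_natCast.mpr (Nat.gcd_dvd_right n k.natAbs)).trans
      (Int.natAbs_dvd.mpr dvd_rfl)
  -- membership in Γn
  have hΓnmem : ∀ g : Γ₀, g ∈ Γn ↔ (n : ℤ) ∣ χ g := fun g => Iff.rfl
  -- key equivalence
  have key : ∀ g g' : Γ₀,
      MulAction.orbit Γn (g • v) = MulAction.orbit Γn (g' • v) ↔ (m : ℤ) ∣ χ g' - χ g := by
    intro g g'
    constructor
    · intro h
      have hmem : g • v ∈ MulAction.orbit Γn (g' • v) := MulAction.orbit_eq_iff.mp h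
      obtain ⟨γ, hγ⟩ := hmem
      -- γ • (g' • v) = g • v
      have hγs : ((γ : Γ₀) * g') • v = g • v := by
        rw [mul_smul]; exact hγ
      have hsmem : g⁻¹ * (γ : Γ₀) * g' ∈ St := by
        have : (g⁻¹ * ((γ : Γ₀) * g')) • v = v := by
          rw [mul_smul, hγs, ← mul_smul, inv_mul_cancel, one_smul]
        show (g⁻¹ * (γ : Γ₀) * g') • v = v
        rw [mul_assoc]; exact this
      have hs : χ (g⁻¹ * (γ : Γ₀) * g') ∈ B := ⟨_, hsmem, rfl⟩
      rw [hkB', Int.mem_zmultiples_iff] at hs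
      obtain ⟨b, hb⟩ := hs
      have hγn : (n : ℤ) ∣ χ (γ : Γ₀) := γ.2
      obtain ⟨a, ha⟩ := hγn
      have hval : χ (g⁻¹ * (γ : Γ₀) * g') = - χ g + χ (γ : Γ₀) + χ g' := by
        rw [hχ, hχ, hχinv]
      have : χ g' - χ g = k * b - n * a := by
        rw [hb, ha] at hval
        omega
      rw [this]
      exact dvd_sub (Dvd.dvd.mul_right hmk b) (Dvd.dvd.mul_right hmn a)
    · intro h
      obtain ⟨t, ht⟩ := h
      -- Bezout
      have hbez : (m : ℤ) = n * Int.gcdA n k + k * Int.gcdB n k := by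
        have := Int.gcd_eq_gcd_ab (n : ℤ) k
        have hg : Int.gcd (n : ℤ) k = m := by
          simp [hm, Int.gcd]
        rw [hg] at this
        exact this
      set a : ℤ := Int.gcdA n k * t with hady
      set b : ℤ := Int.gcdB n k * t with hbdy
      have hdiff : χ g' - χ g = n * a + k * b := by
        rw [ht, hbez]; ring
      -- find s ∈ St with χ s = k * b
      have hkbB : k * b ∈ B := by
        rw [hkB', Int.mem_zmultiples_iff]
        exact Dvd.intro b rfl
      obtain ⟨s, hsSt, hsval⟩ := hkbB
      set γ : Γ₀ := g' * s⁻¹ * g⁻¹ with hγdef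
      have hγval : χ γ = n * a := by
        rw [hγdef, hχ, hχ, hχinv, hχinv, hsval]
        omega
      have hγΓn : γ ∈ Γn := by
        rw [hΓnmem, hγval]
        exact Dvd.intro a rfl
      have hmemo : g' • v ∈ MulAction.orbit Γn (g • v) := by
        refine ⟨⟨γ, hγΓn⟩, ?_⟩
        show γ • (g • v) = g' • v
        rw [← mul_smul, hγdef]
        have hsv0 : s • v = v := hsSt
        have hsv : s⁻¹ • v = v := inv_smul_eq_iff.mpr hsv0.symm
        calc (g' * s⁻¹ * g⁻¹ * g) • v = (g' * s⁻¹) • v := by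
              rw [mul_assoc, inv_mul_cancel, mul_one]
          _ = g' • (s⁻¹ • v) := mul_smul _ _ _
          _ = g' • v := by rw [hsv]
      exact (MulAction.orbit_eq_iff.mpr hmemo).symm
  -- the set of orbits is the range of φ
  set φ : Γ₀ → Set C := fun g => MulAction.orbit Γn (g • v) with hφ
  have hSr : {T : Set C | ∃ w ∈ MulAction.orbit Γ₀ v, T = MulAction.orbit Γn w}
      = Set.range φ := by
    ext T
    constructor
    · rintro ⟨w, ⟨g, rfl⟩, rfl⟩
      exact ⟨g, rfl⟩
    · rintro ⟨g, rfl⟩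
      exact ⟨g • v, ⟨g, rfl⟩, rfl⟩
  haveI : NeZero m := ⟨hm0.ne'⟩
  -- injection into ZMod m
  set f : Set.range φ → ZMod m := fun x => ((χ (Classical.choose x.2) : ℤ) : ZMod m) with hf
  have hspec : ∀ x : Set.range φ, φ (Classical.choose x.2) = (x : Set C) :=
    fun x => Classical.choose_spec x.2
  have hfinj : Function.Injective f := by
    intro x y hxy
    have hdvd : (m : ℤ) ∣ χ (Classical.choose y.2) - χ (Classical.choose x.2) := by
      rw [hf, ZMod.intCast_eq_intCast_iff] at hxy
      exact hxy.dvd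
    have := (key (Classical.choose x.2) (Classical.choose y.2)).mpr hdvd
    apply Subtype.ext
    rw [← hspec x, ← hspec y]
    exact this
  have hfin : Finite (Set.range φ) := Finite.of_injective f hfinj
  constructor
  · rw [hSr]
    exact Set.finite_coe_iff.mp hfin
  · rw [hSr, hclB, hkB', Int.index_zmultiples]
    have h1 : (Set.range φ).ncard = Nat.card (Set.range φ) := Nat.card_coe_set_eq _ |>.symm
    rw [h1]
    have h2 : Nat.card (Set.range φ) ≤ Nat.card (ZMod m) :=
      Nat.card_le_card_of_injective f hfinj
    rw [Nat.card_zmod] at h2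
    exact h2.trans (Nat.le_of_dvd (Int.natAbs_pos.mpr hk0) (Nat.gcd_dvd_right _ _))
end

section
/- Let Γ₀ be a group acting on a set C and let χ : Γ₀ → ℤ be a surjective group homomorphism. For each positive integer n set Γₙ = χ⁻¹(nℤ). Let E ⊆ C be a Γ₀-invariant subset which is the union of finitely many Γ₀-orbits, say E = Γ₀·v₁ ∪ ⋯ ∪ Γ₀·v_s, and assume χ(Stab_{Γ₀}(vᵢ)) ≠ {0} for each i = 1, …, s. Then there exists a constant B such that for every positive integer n, the number of Γₙ-orbits contained in E is at most B. -/
/-- Let `Γ₀` act on a set `C`, let `χ : Γ₀ → ℤ` be a surjective homomorphism, and set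
`Γₙ = χ⁻¹(nℤ)`.  If `E ⊆ C` is a union of finitely many `Γ₀`-orbits `Γ₀·v₁ ∪ ⋯ ∪ Γ₀·v_s`
and `χ` does not vanish identically on any stabilizer `Stab_{Γ₀}(vᵢ)`, then the number of
`Γₙ`-orbits contained in `E` is bounded by a constant independent of `n`. -/
theorem card_suborbits_bounded
    {Γ₀ C : Type*} [Group Γ₀] [MulAction Γ₀ C]
    (χ : Γ₀ → ℤ) (hχ : ∀ a b : Γ₀, χ (a * b) = χ a + χ b)
    (hsurj : Function.Surjective χ)
    (s : ℕ) (vs : Fin s → C) (E : Set C)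
    (hE : E = ⋃ i, MulAction.orbit Γ₀ (vs i))
    (hstab : ∀ i, ∃ g ∈ MulAction.stabilizer Γ₀ (vs i), χ g ≠ 0) :
    ∃ B : ℕ, ∀ n : ℕ, 0 < n →
      {T : Set C | ∃ w ∈ E, T = MulAction.orbit (kerModN χ hχ (n : ℤ)) w}.Finite ∧
      {T : Set C | ∃ w ∈ E, T = MulAction.orbit (kerModN χ hχ (n : ℤ)) w}.ncard ≤ B := by
  classical
  choose h hmem hne using hstab
  choose g hg using hsurj
  -- χ of 1 and inverses and powers
  have h1 : χ (1 : Γ₀) = 0 := by have := hχ 1 1; simp only [one_mul] at this; omega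
  have hinv : ∀ a : Γ₀, χ a⁻¹ = -χ a := by
    intro a
    have := hχ a⁻¹ a
    rw [inv_mul_cancel, h1] at this
    omega
  have hzpow : ∀ (x : Γ₀) (k : ℤ), χ (x ^ k) = k * χ x := by
    intro x k
    let φ : Γ₀ →* Multiplicative ℤ :=
      MonoidHom.mk' (fun g => Multiplicative.ofAdd (χ g)) (by intro a b; simp [hχ, ofAdd_add])
    have h2 := map_zpow φ x k
    have h3 := congrArg Multiplicative.toAdd h2
    simpa [φ] using h3
  set M : ℤ := ∑ i, (χ (h i)) ^ 2 with hMdef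
  refine ⟨((Finset.univ : Finset (Fin s)) ×ˢ Finset.Ico (0:ℤ) M).card, ?_⟩
  intro n hn
  set K : Subgroup Γ₀ := kerModN χ hχ (n : ℤ) with hK
  set f : Fin s × ℤ → Set C := fun p => MulAction.orbit K (g p.2 • vs p.1) with hf
  have hsub : {T : Set C | ∃ w ∈ E, T = MulAction.orbit K w} ⊆
      f '' ↑((Finset.univ : Finset (Fin s)) ×ˢ Finset.Ico (0:ℤ) M) := by
    rintro T ⟨w, hw, rfl⟩
    rw [hE] at hw
    obtain ⟨i, a, rfl⟩ : ∃ i a, (a : Γ₀) • vs i = w := by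
      simpa [MulAction.orbit, eq_comm] using hw
    set c : ℤ := χ (h i) with hc
    have hcne : c ≠ 0 := hne i
    set m : ℤ := c ^ 2 with hm
    have hmpos : 0 < m := by positivity
    have hmM : m ≤ M := by
      rw [hMdef]
      exact Finset.single_le_sum (fun j _ => sq_nonneg (χ (h j))) (Finset.mem_univ i)
    set r : ℤ := χ a % m with hr
    have hr0 : 0 ≤ r := Int.emod_nonneg _ (ne_of_gt hmpos)
    have hrM : r < M := lt_of_lt_of_le (Int.emod_lt_of_pos _ hmpos) hmM
    set k : ℤ := -(χ a / m) * c with hk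
    set a' : Γ₀ := a * (h i) ^ k with ha'
    have hχa' : χ a' = r := by
      rw [ha', hχ, hzpow, hk, hr]
      have : χ a % m = χ a - m * (χ a / m) := Int.emod_def _ _
      rw [this, hm]
      ring
    have hwa' : a' • vs i = a • vs i := by
      rw [ha', mul_smul]
      have : (h i) ^ k • vs i = vs i := by
        have := zpow_mem (hmem i) k
        rwa [MulAction.mem_stabilizer_iff] at this
      rw [this]
    have hmemK : g r * a'⁻¹ ∈ K := by
      show ((n : ℤ)) ∣ χ (g r * a'⁻¹)
      rw [hχ, hinv, hχa', hg]
      simp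
    refine ⟨(i, r), by simp [hr0, hrM], ?_⟩
    have horb := MulAction.orbit_smul (⟨g r * a'⁻¹, hmemK⟩ : K) (a • vs i)
    have hsmul : (⟨g r * a'⁻¹, hmemK⟩ : K) • (a • vs i) = g r • vs i := by
      rw [← hwa']
      show (g r * a'⁻¹) • (a' • vs i) = g r • vs i
      rw [← mul_smul, inv_mul_cancel_right]
    rw [hf]
    simp only
    rw [← horb, hsmul]
  have hfin : {T : Set C | ∃ w ∈ E, T = MulAction.orbit K w}.Finite :=
    Set.Finite.subset (Set.Finite.image f (Finset.finite_toSet _)) hsub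
  refine ⟨hfin, ?_⟩
  calc {T : Set C | ∃ w ∈ E, T = MulAction.orbit K w}.ncard
      ≤ (f '' ↑((Finset.univ : Finset (Fin s)) ×ˢ Finset.Ico (0:ℤ) M)).ncard :=
        Set.ncard_le_ncard hsub (Set.Finite.image f (Finset.finite_toSet _))
    _ ≤ (↑((Finset.univ : Finset (Fin s)) ×ˢ Finset.Ico (0:ℤ) M) : Set (Fin s × ℤ)).ncard :=
        Set.ncard_image_le (Finset.finite_toSet _)
    _ = ((Finset.univ : Finset (Fin s)) ×ˢ Finset.Ico (0:ℤ) M).card := Set.ncard_coe_finset _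
end
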